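/- arXiv:2105.06459 — 9 statements merged into one kernel-verified Lean document; each statement's English description precedes it below -/
import Mathlib

section
/- Let V be a finite set of m distinct points in ℝ^d, let 1 ≤ r ≤ m, and let w = (w_1,…,w_r) be a strictly decreasing sequence of r positive real numbers summing to one. Then the set of extreme points (vertices) of the lineup polytope L_{r,w}(V) is exactly the set of weighted vectors o_w(ℓ) over all r-lineups ℓ of V. -/
noncomputable section

/-- Euclidean inner product on `Fin d → ℝ`. -/
def dotp {d : ℕ} (y x : Fin d → ℝ) : ℝ := ∑ i, y i * x i

/-- An ordered `r`-tuple of pairwise distinct points of `V`. -/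
def IsTupleOf {d r : ℕ} (V : Set (Fin d → ℝ)) (ℓ : Fin r → (Fin d → ℝ)) : Prop :=
  Function.Injective ℓ ∧ ∀ k, ℓ k ∈ V

/-- The linear functional `⟨y, ·⟩` induces the tuple `ℓ` as a lineup of `V`:
its values on `ℓ` are strictly decreasing, and strictly larger than its values
on the remaining points of `V`. -/
def Induces {d r : ℕ} (V : Set (Fin d → ℝ)) (y : Fin d → ℝ)
    (ℓ : Fin r → (Fin d → ℝ)) : Prop :=
  (∀ k l : Fin r, k < l → dotp y (ℓ l) < dotp y (ℓ k)) ∧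
  (∀ b ∈ V, b ∉ Set.range ℓ → ∀ k, dotp y b < dotp y (ℓ k))

/-- `ℓ` is an `r`-lineup of `V`. -/
def IsLineup {d r : ℕ} (V : Set (Fin d → ℝ)) (ℓ : Fin r → (Fin d → ℝ)) : Prop :=
  IsTupleOf V ℓ ∧ ∃ y : Fin d → ℝ, Induces V y ℓ

/-- The weighted vector `o_w(ℓ) = ∑ k, w k • ℓ k`. -/
def oVec {d r : ℕ} (w : Fin r → ℝ) (ℓ : Fin r → (Fin d → ℝ)) : Fin d → ℝ :=
  fun i => ∑ k, w k * ℓ k i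

/-- The lineup polytope `L_{r,w}(V)`. -/
def lineupPolytope {d r : ℕ} (V : Set (Fin d → ℝ)) (w : Fin r → ℝ) :
    Set (Fin d → ℝ) :=
  convexHull ℝ {x | ∃ ℓ : Fin r → (Fin d → ℝ), IsTupleOf V ℓ ∧ x = oVec w ℓ}

namespace LineupProof

open Finset

variable {d : ℕ}

abbrev Pt (d : ℕ) := Fin d → ℝ

/-- Extend a tuple `Fin r → Pt d` to `ℕ → Pt d` by junk. -/
def tupExt {r : ℕ} (ℓ : Fin r → Pt d) (j : ℕ) : Pt d :=
  if h : j < r then ℓ ⟨j, h⟩ else 0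

/-- Extend weights to `ℕ` by zero. -/
def Wext {r : ℕ} (w : Fin r → ℝ) (j : ℕ) : ℝ :=
  if h : j < r then w ⟨j, h⟩ else 0

lemma dotp_sum {ι : Type*} (y : Pt d) (t : Finset ι) (c : ι → ℝ) (v : ι → Pt d) :
    dotp y (∑ i ∈ t, c i • v i) = ∑ i ∈ t, c i * dotp y (v i) := by
  unfold dotp
  simp only [Finset.sum_apply, Pi.smul_apply, smul_eq_mul, Finset.mul_sum]
  rw [Finset.sum_comm]
  refine Finset.sum_congr rfl fun i _ => Finset.sum_congr rfl fun j _ => by ring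

lemma oVec_eq_sum {r : ℕ} (w : Fin r → ℝ) (ℓ : Fin r → Pt d) :
    oVec w ℓ = ∑ k, w k • ℓ k := by
  funext i
  simp [oVec, Finset.sum_apply]

lemma dotp_oVec {r : ℕ} (y : Pt d) (w : Fin r → ℝ) (ℓ : Fin r → Pt d) :
    dotp y (oVec w ℓ) = ∑ k, w k * dotp y (ℓ k) := by
  rw [oVec_eq_sum, dotp_sum]

lemma isLinearMap_dotp (y : Pt d) : IsLinearMap ℝ (dotp y) := by
  constructor
  · intro a b
    simp [dotp, mul_add, Finset.sum_add_distrib]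
  · intro c a
    simp [dotp, Finset.mul_sum, smul_eq_mul, mul_left_comm]

lemma dotp_combo (y u v : Pt d) (a b : ℝ) :
    dotp y (a • u + b • v) = a * dotp y u + b * dotp y v := by
  have h := isLinearMap_dotp (d := d) y
  rw [h.map_add, h.map_smul, h.map_smul, smul_eq_mul, smul_eq_mul]

lemma tupExt_injOn' {r : ℕ} (ℓ : Fin r → Pt d) (hinj : Function.Injective ℓ)
    {n : ℕ} (hn : n ≤ r) :
    ∀ j1 ∈ Finset.range n, ∀ j2 ∈ Finset.range n, tupExt ℓ j1 = tupExt ℓ j2 → j1 = j2 := by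
  intro j1 h1 j2 h2 he
  rw [Finset.mem_range] at h1 h2
  have hj1 : j1 < r := lt_of_lt_of_le h1 hn
  have hj2 : j2 < r := lt_of_lt_of_le h2 hn
  rw [tupExt, tupExt, dif_pos hj1, dif_pos hj2] at he
  exact congrArg Fin.val (hinj he)

/-- Weak top-`n` prefix-sum inequality. -/
lemma topk_le (V : Finset (Pt d)) (f : Pt d → ℝ) {r : ℕ} (ℓ ℓ' : Fin r → Pt d)
    (hinj : Function.Injective ℓ) (hmem : ∀ k, ℓ k ∈ V)
    (hinj' : Function.Injective ℓ') (hmem' : ∀ k, ℓ' k ∈ V)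
    (hdec : ∀ k l : Fin r, k ≤ l → f (ℓ l) ≤ f (ℓ k))
    (hout : ∀ b ∈ V, b ∉ Set.range ℓ → ∀ k, f b ≤ f (ℓ k))
    (n : ℕ) (hn : n ≤ r) :
    ∑ j ∈ Finset.range n, f (tupExt ℓ' j) ≤ ∑ j ∈ Finset.range n, f (tupExt ℓ j) := by
  classical
  rcases Nat.eq_zero_or_pos n with rfl | hnpos
  · simp
  set A := (Finset.range n).image (tupExt ℓ') with hA
  set B := (Finset.range n).image (tupExt ℓ) with hB
  have hInjA := tupExt_injOn' ℓ' hinj' hn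
  have hInjB := tupExt_injOn' ℓ hinj hn
  have eqA : ∑ a ∈ A, f a = ∑ j ∈ Finset.range n, f (tupExt ℓ' j) :=
    Finset.sum_image hInjA
  have eqB : ∑ a ∈ B, f a = ∑ j ∈ Finset.range n, f (tupExt ℓ j) :=
    Finset.sum_image hInjB
  have hAcard : A.card = n := by
    rw [hA, Finset.card_image_of_injOn, Finset.card_range]
    intro j1 h1 j2 h2 he
    exact hInjA j1 h1 j2 h2 he
  have hBcard : B.card = n := by
    rw [hB, Finset.card_image_of_injOn, Finset.card_range]
    intro j1 h1 j2 h2 he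
    exact hInjB j1 h1 j2 h2 he
  have hn1 : n - 1 < r := lt_of_lt_of_le (Nat.sub_lt hnpos one_pos) hn
  set c := f (ℓ ⟨n - 1, hn1⟩) with hc
  have claim1 : ∀ a ∈ A \ B, f a ≤ c := by
    intro a ha
    obtain ⟨haA, haB⟩ := Finset.mem_sdiff.1 ha
    have haV : a ∈ V := by
      obtain ⟨j, hj, rfl⟩ := Finset.mem_image.1 haA
      rw [Finset.mem_range] at hj
      rw [tupExt, dif_pos (lt_of_lt_of_le hj hn)]
      exact hmem' _
    by_cases hrng : a ∈ Set.range ℓ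
    · obtain ⟨i, rfl⟩ := hrng
      have hin : ¬ (i : ℕ) < n := by
        intro hlt
        exact haB (Finset.mem_image.2 ⟨(i : ℕ), Finset.mem_range.2 hlt, by
          rw [tupExt, dif_pos i.isLt, Fin.eta]⟩)
      exact hdec ⟨n - 1, hn1⟩ i (by rw [Fin.le_def]; show n - 1 ≤ (i : ℕ); omega)
    · exact hout a haV hrng _
  have claim2 : ∀ b ∈ B \ A, c ≤ f b := by
    intro b hb
    obtain ⟨hbB, _⟩ := Finset.mem_sdiff.1 hb
    obtain ⟨j, hj, rfl⟩ := Finset.mem_image.1 hbB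
    rw [Finset.mem_range] at hj
    have hjr : j < r := lt_of_lt_of_le hj hn
    rw [tupExt, dif_pos hjr]
    exact hdec ⟨j, hjr⟩ ⟨n - 1, hn1⟩ (by rw [Fin.le_def]; show j ≤ n - 1; omega)
  have hcards : (A \ B).card = (B \ A).card := by
    have h1 := Finset.card_inter_add_card_sdiff A B
    have h2 := Finset.card_inter_add_card_sdiff B A
    rw [Finset.inter_comm] at h2
    omega
  have hA' : ∑ a ∈ A \ B, f a + ∑ a ∈ A ∩ B, f a = ∑ a ∈ A, f a := by
    have := Finset.sum_sdiff (f := f) (Finset.inter_subset_left (s₁ := A) (s₂ := B))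
    rwa [Finset.sdiff_inter_self_left] at this
  have hB' : ∑ a ∈ B \ A, f a + ∑ a ∈ A ∩ B, f a = ∑ a ∈ B, f a := by
    have := Finset.sum_sdiff (f := f) (Finset.inter_subset_left (s₁ := B) (s₂ := A))
    rwa [Finset.sdiff_inter_self_left, Finset.inter_comm] at this
  have hAB : ∑ a ∈ A \ B, f a ≤ ∑ a ∈ B \ A, f a := by
    calc ∑ a ∈ A \ B, f a ≤ (A \ B).card • c := Finset.sum_le_card_nsmul _ _ _ claim1
      _ = (B \ A).card • c := by rw [hcards]
      _ ≤ ∑ a ∈ B \ A, f a := Finset.card_nsmul_le_sum _ _ _ claim2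
  rw [← eqA, ← eqB]
  linarith

/-- Strict top-`n` prefix-sum inequality. -/
lemma topk_lt (V : Finset (Pt d)) (f : Pt d → ℝ) {r : ℕ} (ℓ ℓ' : Fin r → Pt d)
    (hinj : Function.Injective ℓ) (hmem : ∀ k, ℓ k ∈ V)
    (hinj' : Function.Injective ℓ') (hmem' : ∀ k, ℓ' k ∈ V)
    (hdec : ∀ k l : Fin r, k < l → f (ℓ l) < f (ℓ k))
    (hout : ∀ b ∈ V, b ∉ Set.range ℓ → ∀ k, f b < f (ℓ k))
    (n : ℕ) (hn : n ≤ r) (k₀ : Fin r) (hk₀n : (k₀ : ℕ) < n)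
    (hdiff : ∀ j : Fin r, (j : ℕ) < n → ℓ' k₀ ≠ ℓ j) :
    ∑ j ∈ Finset.range n, f (tupExt ℓ' j) < ∑ j ∈ Finset.range n, f (tupExt ℓ j) := by
  classical
  have hnpos : 0 < n := lt_of_le_of_lt (Nat.zero_le _) hk₀n
  set A := (Finset.range n).image (tupExt ℓ') with hA
  set B := (Finset.range n).image (tupExt ℓ) with hB
  have hInjA := tupExt_injOn' ℓ' hinj' hn
  have hInjB := tupExt_injOn' ℓ hinj hn
  have eqA : ∑ a ∈ A, f a = ∑ j ∈ Finset.range n, f (tupExt ℓ' j) :=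
    Finset.sum_image hInjA
  have eqB : ∑ a ∈ B, f a = ∑ j ∈ Finset.range n, f (tupExt ℓ j) :=
    Finset.sum_image hInjB
  have hAcard : A.card = n := by
    rw [hA, Finset.card_image_of_injOn, Finset.card_range]
    intro j1 h1 j2 h2 he
    exact hInjA j1 h1 j2 h2 he
  have hBcard : B.card = n := by
    rw [hB, Finset.card_image_of_injOn, Finset.card_range]
    intro j1 h1 j2 h2 he
    exact hInjB j1 h1 j2 h2 he
  have hn1 : n - 1 < r := lt_of_lt_of_le (Nat.sub_lt hnpos one_pos) hn
  set c := f (ℓ ⟨n - 1, hn1⟩) with hc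
  have claim1 : ∀ a ∈ A \ B, f a < c := by
    intro a ha
    obtain ⟨haA, haB⟩ := Finset.mem_sdiff.1 ha
    have haV : a ∈ V := by
      obtain ⟨j, hj, rfl⟩ := Finset.mem_image.1 haA
      rw [Finset.mem_range] at hj
      rw [tupExt, dif_pos (lt_of_lt_of_le hj hn)]
      exact hmem' _
    by_cases hrng : a ∈ Set.range ℓ
    · obtain ⟨i, rfl⟩ := hrng
      have hin : ¬ (i : ℕ) < n := by
        intro hlt
        exact haB (Finset.mem_image.2 ⟨(i : ℕ), Finset.mem_range.2 hlt, by
          rw [tupExt, dif_pos i.isLt, Fin.eta]⟩)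
      exact hdec ⟨n - 1, hn1⟩ i (by rw [Fin.lt_def]; show n - 1 < (i : ℕ); omega)
    · exact hout a haV hrng _
  have claim2 : ∀ b ∈ B \ A, c ≤ f b := by
    intro b hb
    obtain ⟨hbB, _⟩ := Finset.mem_sdiff.1 hb
    obtain ⟨j, hj, rfl⟩ := Finset.mem_image.1 hbB
    rw [Finset.mem_range] at hj
    have hjr : j < r := lt_of_lt_of_le hj hn
    rw [tupExt, dif_pos hjr]
    rcases Nat.lt_or_ge j (n - 1) with hlt | hge
    · exact (hdec ⟨j, hjr⟩ ⟨n - 1, hn1⟩ (by rw [Fin.lt_def]; exact hlt)).le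
    · have : j = n - 1 := by omega
      subst this
      exact le_rfl
  have hcards : (A \ B).card = (B \ A).card := by
    have h1 := Finset.card_inter_add_card_sdiff A B
    have h2 := Finset.card_inter_add_card_sdiff B A
    rw [Finset.inter_comm] at h2
    omega
  have hA' : ∑ a ∈ A \ B, f a + ∑ a ∈ A ∩ B, f a = ∑ a ∈ A, f a := by
    have := Finset.sum_sdiff (f := f) (Finset.inter_subset_left (s₁ := A) (s₂ := B))
    rwa [Finset.sdiff_inter_self_left] at this
  have hB' : ∑ a ∈ B \ A, f a + ∑ a ∈ A ∩ B, f a = ∑ a ∈ B, f a := by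
    have := Finset.sum_sdiff (f := f) (Finset.inter_subset_left (s₁ := B) (s₂ := A))
    rwa [Finset.sdiff_inter_self_left, Finset.inter_comm] at this
  have ha₀A : ℓ' k₀ ∈ A := Finset.mem_image.2 ⟨(k₀ : ℕ), Finset.mem_range.2 hk₀n, by
    rw [tupExt, dif_pos k₀.isLt, Fin.eta]⟩
  have ha₀B : ℓ' k₀ ∉ B := by
    intro hmemB
    obtain ⟨j, hj, hje⟩ := Finset.mem_image.1 hmemB
    rw [Finset.mem_range] at hj
    have hjr : j < r := lt_of_lt_of_le hj hn
    rw [tupExt, dif_pos hjr] at hje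
    exact hdiff ⟨j, hjr⟩ hj hje.symm
  have hNe : (A \ B).Nonempty := ⟨ℓ' k₀, Finset.mem_sdiff.2 ⟨ha₀A, ha₀B⟩⟩
  have hAB : ∑ a ∈ A \ B, f a < ∑ a ∈ B \ A, f a := by
    have h1 : ∑ a ∈ A \ B, f a < ∑ _a ∈ A \ B, c :=
      Finset.sum_lt_sum_of_nonempty hNe claim1
    rw [Finset.sum_const] at h1
    calc ∑ a ∈ A \ B, f a < (A \ B).card • c := h1
      _ = (B \ A).card • c := by rw [hcards]
      _ ≤ ∑ a ∈ B \ A, f a := Finset.card_nsmul_le_sum _ _ _ claim2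
  rw [← eqA, ← eqB]
  linarith

/-- Abel summation identity. -/
lemma abel_id (W g : ℕ → ℝ) (N : ℕ) :
    ∑ k ∈ Finset.range N, W k * g k =
      ∑ n ∈ Finset.range N, (W n - W (n + 1)) * (∑ j ∈ Finset.range (n + 1), g j)
        + W N * ∑ j ∈ Finset.range N, g j := by
  induction N with
  | zero => simp
  | succ N ih =>
      rw [Finset.sum_range_succ (fun k => W k * g k), ih,
        Finset.sum_range_succ (fun n => (W n - W (n + 1)) * (∑ j ∈ Finset.range (n + 1), g j)),
        Finset.sum_range_succ g N]
      ring

lemma Wext_gap {r : ℕ} (w : Fin r → ℝ) (hww : StrictAnti w) (hwpos : ∀ k, 0 < w k)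
    {n : ℕ} (hn : n < r) : 0 < Wext w n - Wext w (n + 1) := by
  rw [Wext, dif_pos hn]
  by_cases h : n + 1 < r
  · rw [Wext, dif_pos h]
    have := hww (a := ⟨n, hn⟩) (b := ⟨n + 1, h⟩) (Fin.mk_lt_mk.2 (Nat.lt_succ_self n))
    linarith
  · rw [Wext, dif_neg h]
    simpa using hwpos ⟨n, hn⟩

lemma F_eq {r : ℕ} (w : Fin r → ℝ) (f : Pt d → ℝ) (ℓ : Fin r → Pt d) :
    ∑ k, w k * f (ℓ k) = ∑ j ∈ Finset.range r, Wext w j * f (tupExt ℓ j) := by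
  rw [← Fin.sum_univ_eq_sum_range (fun j => Wext w j * f (tupExt ℓ j)) r]
  refine Finset.sum_congr rfl fun k _ => ?_
  rw [Wext, tupExt, dif_pos k.isLt, dif_pos k.isLt, Fin.eta]

/-- Weak maximality of a weakly-sorted tuple. -/
lemma F_le (V : Finset (Pt d)) (f : Pt d → ℝ) {r : ℕ} (w : Fin r → ℝ)
    (hww : StrictAnti w) (hwpos : ∀ k, 0 < w k)
    (ℓ ℓ' : Fin r → Pt d)
    (hinj : Function.Injective ℓ) (hmem : ∀ k, ℓ k ∈ V)
    (hinj' : Function.Injective ℓ') (hmem' : ∀ k, ℓ' k ∈ V)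
    (hdec : ∀ k l : Fin r, k ≤ l → f (ℓ l) ≤ f (ℓ k))
    (hout : ∀ b ∈ V, b ∉ Set.range ℓ → ∀ k, f b ≤ f (ℓ k)) :
    ∑ k, w k * f (ℓ' k) ≤ ∑ k, w k * f (ℓ k) := by
  rw [F_eq, F_eq, abel_id (Wext w) (fun j => f (tupExt ℓ' j)) r,
    abel_id (Wext w) (fun j => f (tupExt ℓ j)) r]
  rw [show Wext w r = 0 from dif_neg (lt_irrefl r)]; simp only [zero_mul, add_zero]
  refine Finset.sum_le_sum fun n hn => ?_
  rw [Finset.mem_range] at hn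
  exact mul_le_mul_of_nonneg_left
    (topk_le V f ℓ ℓ' hinj hmem hinj' hmem' hdec hout (n + 1) (by omega))
    (Wext_gap w hww hwpos hn).le

/-- Strict maximality of a strictly-sorted tuple. -/
lemma F_lt (V : Finset (Pt d)) (f : Pt d → ℝ) {r : ℕ} (w : Fin r → ℝ)
    (hww : StrictAnti w) (hwpos : ∀ k, 0 < w k)
    (ℓ ℓ' : Fin r → Pt d)
    (hinj : Function.Injective ℓ) (hmem : ∀ k, ℓ k ∈ V)
    (hinj' : Function.Injective ℓ') (hmem' : ∀ k, ℓ' k ∈ V)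
    (hdec : ∀ k l : Fin r, k < l → f (ℓ l) < f (ℓ k))
    (hout : ∀ b ∈ V, b ∉ Set.range ℓ → ∀ k, f b < f (ℓ k))
    (hne : ℓ' ≠ ℓ) :
    ∑ k, w k * f (ℓ' k) < ∑ k, w k * f (ℓ k) := by
  classical
  have hdecw : ∀ k l : Fin r, k ≤ l → f (ℓ l) ≤ f (ℓ k) := by
    intro k l hkl
    rcases eq_or_lt_of_le hkl with rfl | h
    · exact le_rfl
    · exact (hdec k l h).le
  have houtw : ∀ b ∈ V, b ∉ Set.range ℓ → ∀ k, f b ≤ f (ℓ k) :=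
    fun b hb hbr k => (hout b hb hbr k).le
  have hfilter : (Finset.univ.filter (fun k : Fin r => ℓ' k ≠ ℓ k)).Nonempty := by
    rcases Function.ne_iff.1 hne with ⟨k, hk⟩
    exact ⟨k, by simp [hk]⟩
  set k₀ := Finset.min' _ hfilter with hk₀def
  have hk₀mem := Finset.min'_mem _ hfilter
  have hk₀ne : ℓ' k₀ ≠ ℓ k₀ := (Finset.mem_filter.1 hk₀mem).2
  have hmin : ∀ j : Fin r, j < k₀ → ℓ' j = ℓ j := by
    intro j hj
    by_contra hcon
    exact absurd (Finset.min'_le _ j (by simp [hcon])) (not_le.2 hj)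
  have hdiff : ∀ j : Fin r, (j : ℕ) < (k₀ : ℕ) + 1 → ℓ' k₀ ≠ ℓ j := by
    intro j hj
    rcases eq_or_lt_of_le (Nat.lt_succ_iff.1 hj) with hje | hjlt
    · have hjk : j = k₀ := Fin.ext hje
      subst hjk
      exact hk₀ne
    · have hjk : j < k₀ := by rw [Fin.lt_def]; exact hjlt
      intro he
      have := hinj' (he.trans (hmin j hjk).symm)
      exact (ne_of_lt hjk) this.symm
  rw [F_eq, F_eq, abel_id (Wext w) (fun j => f (tupExt ℓ' j)) r,
    abel_id (Wext w) (fun j => f (tupExt ℓ j)) r]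
  rw [show Wext w r = 0 from dif_neg (lt_irrefl r)]; simp only [zero_mul, add_zero]
  refine Finset.sum_lt_sum (fun n hn => ?_) ⟨(k₀ : ℕ), Finset.mem_range.2 k₀.isLt, ?_⟩
  · rw [Finset.mem_range] at hn
    exact mul_le_mul_of_nonneg_left
      (topk_le V f ℓ ℓ' hinj hmem hinj' hmem' hdecw houtw (n + 1) (by omega))
      (Wext_gap w hww hwpos hn).le
  · exact mul_lt_mul_of_pos_left
      (topk_lt V f ℓ ℓ' hinj hmem hinj' hmem' hdec hout ((k₀ : ℕ) + 1)
        (by have := k₀.isLt; omega) k₀ (Nat.lt_succ_self _) hdiff)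
      (Wext_gap w hww hwpos k₀.isLt)

end LineupProof

namespace LineupProof

variable {d : ℕ}

/-- A point where a linear functional attains a strict maximum over `S` is an
extreme point of the convex hull of `S`. -/
lemma mem_extremePoints_of_strict {S : Set (Pt d)} {y x : Pt d} (hx : x ∈ S)
    (h : ∀ s ∈ S, s ≠ x → dotp y s < dotp y x) :
    x ∈ Set.extremePoints ℝ (convexHull ℝ S) := by
  have hhalf : ∀ z ∈ convexHull ℝ S, dotp y z ≤ dotp y x := by
    intro z hz
    have hsub : convexHull ℝ S ⊆ {z : Pt d | dotp y z ≤ dotp y x} := by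
      apply convexHull_min
      · intro s hs
        simp only [Set.mem_setOf_eq]
        by_cases hsx : s = x
        · subst hsx; exact le_rfl
        · exact (h s hs hsx).le
      · exact convex_halfSpace_le (isLinearMap_dotp y) _
    exact hsub hz
  have key : ∀ z ∈ convexHull ℝ S, dotp y z = dotp y x → z = x := by
    intro z hz hze
    rw [convexHull_eq] at hz
    obtain ⟨ι, t, c, p, hc0, hc1, hpS, hcm⟩ := hz
    rw [Finset.centerMass_eq_of_sum_1 _ _ hc1] at hcm
    have hz' : dotp y z = ∑ i ∈ t, c i * dotp y (p i) := by
      rw [← hcm, dotp_sum]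
    have hterm : ∀ i ∈ t, c i * dotp y (p i) ≤ c i * dotp y x := fun i hi =>
      mul_le_mul_of_nonneg_left (hhalf _ (subset_convexHull ℝ _ (hpS i hi))) (hc0 i hi)
    have hall : ∀ i ∈ t, c i ≠ 0 → p i = x := by
      intro i hi hci
      by_contra hpne
      have hstrict : c i * dotp y (p i) < c i * dotp y x :=
        mul_lt_mul_of_pos_left (h _ (hpS i hi) hpne) (lt_of_le_of_ne (hc0 i hi) (Ne.symm hci))
      have hsum : ∑ i ∈ t, c i * dotp y (p i) < ∑ i ∈ t, c i * dotp y x :=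
        Finset.sum_lt_sum hterm ⟨i, hi, hstrict⟩
      rw [← hz', ← Finset.sum_mul, hc1, one_mul, hze] at hsum
      exact lt_irrefl _ hsum
    have hzx : z = ∑ i ∈ t, c i • x := by
      rw [← hcm]
      refine Finset.sum_congr rfl fun i hi => ?_
      by_cases hci : c i = 0
      · simp [hci]
      · rw [hall i hi hci]
    rw [hzx, ← Finset.sum_smul, hc1, one_smul]
  rw [mem_extremePoints]
  refine ⟨subset_convexHull ℝ S hx, ?_⟩
  intro x₁ hx₁ x₂ hx₂ hseg
  obtain ⟨a, b, ha, hb, hab, hsum⟩ := hseg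
  have e1 : dotp y x = a * dotp y x₁ + b * dotp y x₂ := by
    rw [← hsum, dotp_combo]
  have h1 : dotp y x₁ ≤ dotp y x := hhalf _ hx₁
  have h2 : dotp y x₂ ≤ dotp y x := hhalf _ hx₂
  have hx' : a * dotp y x + b * dotp y x = dotp y x := by
    rw [← add_mul, hab, one_mul]
  have e2 : dotp y x₁ = dotp y x := by
    by_contra hne
    have hlt : dotp y x₁ < dotp y x := lt_of_le_of_ne h1 hne
    have hm1 : a * dotp y x₁ < a * dotp y x := mul_lt_mul_of_pos_left hlt ha
    have hm2 : b * dotp y x₂ ≤ b * dotp y x := mul_le_mul_of_nonneg_left h2 hb.le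
    linarith
  have e3 : dotp y x₂ = dotp y x := by
    by_contra hne
    have hlt : dotp y x₂ < dotp y x := lt_of_le_of_ne h2 hne
    have hm2 : b * dotp y x₂ < b * dotp y x := mul_lt_mul_of_pos_left hlt hb
    have hm1 : a * dotp y x₁ ≤ a * dotp y x := mul_le_mul_of_nonneg_left h1 ha.le
    linarith
  exact ⟨key _ hx₁ e2, key _ hx₂ e3⟩

/-- A continuous linear functional is given by `dotp` with an explicit vector. -/
lemma dotp_eq_clm (fL : (Fin d → ℝ) →L[ℝ] ℝ) (v : Fin d → ℝ) :
    dotp (fun i => fL (Pi.single i 1)) v = fL v := by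
  have hv : v = ∑ i, v i • (Pi.single i 1 : Fin d → ℝ) := by
    conv_lhs => rw [pi_eq_sum_univ v]
    refine Finset.sum_congr rfl fun i _ => ?_
    have hs : (fun j => if i = j then (1 : ℝ) else 0) = (Pi.single i 1 : Fin d → ℝ) := by
      funext j
      simp [Pi.single_apply, eq_comm]
    rw [hs]
  calc dotp (fun i => fL (Pi.single i 1)) v = ∑ i, v i * fL (Pi.single i 1) := by
        unfold dotp
        exact Finset.sum_congr rfl fun i _ => mul_comm _ _
    _ = fL v := by
        conv_rhs => rw [hv, map_sum]
        refine Finset.sum_congr rfl fun i _ => ?_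
        rw [map_smul, smul_eq_mul]

/-- There is a vector whose inner product is injective on a finite set. -/
lemma exists_dotp_injOn (V : Finset (Pt d)) :
    ∃ z : Pt d, Set.InjOn (dotp z) ↑V := by
  classical
  have key : ∀ a b : Pt d, a ≠ b →
      {t : ℝ | ∑ i, (a i - b i) * t ^ (i : ℕ) = 0}.Finite := by
    intro a b hab
    obtain ⟨j, hj⟩ : ∃ j, a j ≠ b j := by
      by_contra hcon
      push_neg at hcon
      exact hab (funext hcon)
    set p : Polynomial ℝ := ∑ i : Fin d, Polynomial.C (a i - b i) * Polynomial.X ^ (i : ℕ)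
      with hp
    have hpne : p ≠ 0 := by
      intro h0
      have hcoeff : p.coeff (j : ℕ) = a j - b j := by
        rw [hp, Polynomial.finset_sum_coeff]
        have hterm : ∀ i : Fin d,
            (Polynomial.C (a i - b i) * Polynomial.X ^ (i : ℕ)).coeff (j : ℕ)
              = if i = j then a i - b i else 0 := by
          intro i
          rw [Polynomial.coeff_C_mul, Polynomial.coeff_X_pow]
          by_cases h : i = j
          · subst h; simp
          · have hne : ¬ ((j : ℕ) = (i : ℕ)) := fun he => h (Fin.ext he.symm)
            simp [h, hne]
        simp only [hterm]
        simp
      rw [h0, Polynomial.coeff_zero] at hcoeff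
      exact hj (by linarith [sub_eq_zero.1 hcoeff.symm])
    have hfin := Polynomial.finite_setOf_isRoot hpne
    refine hfin.subset ?_
    intro t ht
    simp only [Set.mem_setOf_eq] at ht ⊢
    show p.eval t = 0
    rw [hp]
    rw [Polynomial.eval_finset_sum]
    simpa using ht
  set Bad : Set ℝ :=
    ⋃ q ∈ (↑(V ×ˢ V) : Set (Pt d × Pt d)),
      {t : ℝ | q.1 ≠ q.2 ∧ ∑ i, (q.1 i - q.2 i) * t ^ (i : ℕ) = 0} with hBad
  have hBadFin : Bad.Finite := by
    refine Set.Finite.biUnion (Finset.finite_toSet _) ?_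
    intro q _
    by_cases hq : q.1 = q.2
    · refine Set.Finite.subset (Set.finite_empty) ?_
      intro t ht
      exact absurd hq ht.1
    · exact (key q.1 q.2 hq).subset fun t ht => ht.2
  obtain ⟨t, ht⟩ : ∃ t : ℝ, t ∉ Bad := by
    by_contra hcon
    push_neg at hcon
    have : (Set.univ : Set ℝ).Finite := hBadFin.subset fun t _ => hcon t
    exact Set.infinite_univ this
  refine ⟨fun i => t ^ (i : ℕ), ?_⟩
  intro a ha b hb hde
  by_contra hne
  apply ht
  rw [hBad]
  refine Set.mem_biUnion (x := (a, b)) ?_ ?_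
  · exact_mod_cast Finset.mk_mem_product ha hb
  · refine ⟨hne, ?_⟩
    have : dotp (fun i => t ^ (i : ℕ)) a - dotp (fun i => t ^ (i : ℕ)) b = 0 := by
      rw [hde]; ring
    rw [dotp, dotp, ← Finset.sum_sub_distrib] at this
    rw [← this]
    refine Finset.sum_congr rfl fun i _ => by ring

/-- Existence of a strictly sorted tuple for an injective functional. -/
lemma exists_sorted_tuple (f : Pt d → ℝ) :
    ∀ (r : ℕ) (V : Finset (Pt d)), Set.InjOn f ↑V → r ≤ V.card →
    ∃ ℓ : Fin r → Pt d, Function.Injective ℓ ∧ (∀ k, ℓ k ∈ V) ∧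
      (∀ k l : Fin r, k < l → f (ℓ l) < f (ℓ k)) ∧
      (∀ b ∈ V, b ∉ Set.range ℓ → ∀ k, f b < f (ℓ k)) := by
  intro r
  induction r with
  | zero =>
      intro V _ _
      exact ⟨Fin.elim0, fun k => k.elim0, fun k => k.elim0,
        fun k => k.elim0, fun b _ _ k => k.elim0⟩
  | succ r ih =>
      intro V hinjOn hcard
      have hV : V.Nonempty := Finset.card_pos.1 (by omega)
      obtain ⟨v, hv, hmax⟩ := V.exists_max_image f hV
      have hsub : ↑(V.erase v) ⊆ (↑V : Set (Pt d)) := by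
        intro a ha
        simp only [Finset.coe_erase, Set.mem_diff] at ha
        exact ha.1
      have hcard' : r ≤ (V.erase v).card := by
        rw [Finset.card_erase_of_mem hv]; omega
      obtain ⟨ℓ', h1, h2, h3, h4⟩ := ih (V.erase v) (hinjOn.mono hsub) hcard'
      have hstrictmax : ∀ a ∈ V, a ≠ v → f a < f v := by
        intro a ha hane
        refine lt_of_le_of_ne (hmax a ha) fun he => hane (hinjOn ha hv he)
      refine ⟨Fin.cons v ℓ', ?_, ?_, ?_, ?_⟩
      · rw [Fin.cons_injective_iff]
        refine ⟨?_, h1⟩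
        rintro ⟨k, hk⟩
        exact (Finset.ne_of_mem_erase (h2 k)) hk
      · intro k
        rcases Fin.eq_zero_or_eq_succ k with rfl | ⟨k', rfl⟩
        · rw [Fin.cons_zero]; exact hv
        · rw [Fin.cons_succ]; exact Finset.mem_of_mem_erase (h2 k')
      · intro k l hkl
        rcases Fin.eq_zero_or_eq_succ l with rfl | ⟨l', rfl⟩
        · exact absurd hkl (Fin.not_lt_zero k)
        · rcases Fin.eq_zero_or_eq_succ k with rfl | ⟨k', rfl⟩
          · rw [Fin.cons_zero, Fin.cons_succ]
            exact hstrictmax _ (Finset.mem_of_mem_erase (h2 l'))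
              (Finset.ne_of_mem_erase (h2 l'))
          · rw [Fin.cons_succ, Fin.cons_succ]
            exact h3 k' l' (by rwa [Fin.succ_lt_succ_iff] at hkl)
      · intro b hb hbr k
        have hbv : b ≠ v := by
          rintro rfl
          exact hbr ⟨0, Fin.cons_zero _ _⟩
        have hb' : b ∈ V.erase v := Finset.mem_erase.2 ⟨hbv, hb⟩
        have hbr' : b ∉ Set.range ℓ' := by
          rintro ⟨k', hk'⟩
          exact hbr ⟨k'.succ, by rw [Fin.cons_succ]; exact hk'⟩
        rcases Fin.eq_zero_or_eq_succ k with rfl | ⟨k', rfl⟩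
        · rw [Fin.cons_zero]; exact hstrictmax b hb hbv
        · rw [Fin.cons_succ]; exact h4 b hb' hbr' k'

/-- A small positive `ε` preserving strict inequalities. -/
lemma exists_refine (V : Finset (Pt d)) (f g : Pt d → ℝ) :
    ∃ ε : ℝ, 0 < ε ∧ ∀ a ∈ V, ∀ b ∈ V, f a < f b → f a + ε * g a < f b + ε * g b := by
  classical
  set P := (V ×ˢ V).filter (fun q => f q.1 < f q.2) with hP
  set c : (Pt d × Pt d) → ℝ := fun q => (f q.2 - f q.1) / (|g q.1 - g q.2| + 1) with hc
  set T := insert (1 : ℝ) (P.image c) with hT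
  have hTne : T.Nonempty := ⟨1, Finset.mem_insert_self _ _⟩
  have hpos : 0 < T.min' hTne := by
    rw [Finset.lt_min'_iff]
    intro u hu
    rcases Finset.mem_insert.1 hu with rfl | hu
    · exact one_pos
    · obtain ⟨q, hq, rfl⟩ := Finset.mem_image.1 hu
      have hq' := (Finset.mem_filter.1 hq).2
      exact div_pos (by linarith) (by positivity)
  refine ⟨T.min' hTne, hpos, ?_⟩
  intro a ha b hb hfab
  set ε := T.min' hTne with hε
  have hqP : (a, b) ∈ P := Finset.mem_filter.2 ⟨Finset.mk_mem_product ha hb, hfab⟩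
  have hεc : ε ≤ c (a, b) :=
    Finset.min'_le _ _ (Finset.mem_insert_of_mem (Finset.mem_image_of_mem c hqP))
  have h1 : ε * (g a - g b) ≤ ε * |g a - g b| :=
    mul_le_mul_of_nonneg_left (le_abs_self _) hpos.le
  have h2 : ε * (|g a - g b| + 1) ≤ c (a, b) * (|g a - g b| + 1) :=
    mul_le_mul_of_nonneg_right hεc (by positivity)
  have h3 : c (a, b) * (|g a - g b| + 1) = f b - f a := by
    rw [hc]
    exact div_mul_cancel₀ _ (by positivity)
  have h4 : ε * (g a - g b) = ε * g a - ε * g b := by ring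
  have h5 : ε * (|g a - g b| + 1) = ε * |g a - g b| + ε := by ring
  linarith

end LineupProof

open LineupProof in
/-- The vertices of the lineup polytope are exactly the weighted vectors of lineups. -/
theorem extremePoints_lineupPolytope
    {d m r : ℕ} (V : Finset (Fin d → ℝ)) (hVm : V.card = m)
    (hr1 : 1 ≤ r) (hrm : r ≤ m)
    (w : Fin r → ℝ) (hww : StrictAnti w) (hwpos : ∀ k, 0 < w k)
    (hwsum : ∑ k, w k = 1) :
    Set.extremePoints ℝ (lineupPolytope (V : Set (Fin d → ℝ)) w) =
      {x | ∃ ℓ : Fin r → (Fin d → ℝ), IsLineup (V : Set (Fin d → ℝ)) ℓ ∧ x = oVec w ℓ} := by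
  classical
  ext x
  simp only [Set.mem_setOf_eq]
  constructor
  · intro hx
    unfold lineupPolytope at hx
    set S : Set (Fin d → ℝ) :=
      {x | ∃ ℓ : Fin r → (Fin d → ℝ), IsTupleOf (↑V) ℓ ∧ x = oVec w ℓ} with hSdef
    have hxS : x ∈ S := extremePoints_convexHull_subset hx
    obtain ⟨ℓ₀, hℓ₀, hx₀⟩ := hxS
    have hSfin : S.Finite := by
      have hsub : S ⊆ (fun ℓ : Fin r → (Fin d → ℝ) => oVec w ℓ) ''
          (Set.univ.pi fun _ : Fin r => (↑V : Set (Fin d → ℝ))) := by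
        rintro z ⟨ℓ, ⟨_, hmemz⟩, rfl⟩
        exact ⟨ℓ, fun k _ => hmemz k, rfl⟩
      exact ((Set.Finite.pi fun _ => V.finite_toSet).image _).subset hsub
    have hnot : x ∉ convexHull ℝ (S \ {x}) := by
      have h1 := ((convex_convexHull ℝ S).mem_extremePoints_iff_mem_diff_convexHull_diff).1 hx
      intro hmem
      exact h1.2 (convexHull_mono (Set.diff_subset_diff_left (subset_convexHull ℝ S)) hmem)
    have hfin' : (S \ {x}).Finite := hSfin.subset Set.diff_subset
    obtain ⟨fL, u, hu1, hu2⟩ := geometric_hahn_banach_closed_point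
      (convex_convexHull ℝ _) (hfin'.isCompact_convexHull (𝕜 := ℝ)).isClosed hnot
    set y : Fin d → ℝ := fun i => fL (Pi.single i 1) with hy
    have hysep : ∀ s ∈ S, s ≠ x → dotp y s < dotp y x := by
      intro s hs hne
      have h1 : fL s < u := hu1 s (subset_convexHull ℝ _ ⟨hs, hne⟩)
      rw [hy, dotp_eq_clm, dotp_eq_clm]
      linarith
    obtain ⟨z, hz⟩ := exists_dotp_injOn V
    obtain ⟨ε, hεpos, href⟩ := exists_refine V (dotp y) (dotp z)
    set y' : Fin d → ℝ := fun i => y i + ε * z i with hy'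
    have hy'v : ∀ v, dotp y' v = dotp y v + ε * dotp z v := by
      intro v
      simp only [dotp, hy', add_mul, Finset.sum_add_distrib, Finset.mul_sum]
      congr 1
      exact Finset.sum_congr rfl fun i _ => by ring
    have hinj' : Set.InjOn (dotp y') ↑V := by
      intro a ha b hb hab
      rcases lt_trichotomy (dotp y a) (dotp y b) with h | h | h
      · exfalso
        have h1 := href a (by exact_mod_cast ha) b (by exact_mod_cast hb) h
        rw [hy'v, hy'v] at hab
        linarith
      · refine hz ha hb ?_
        rw [hy'v, hy'v, h] at hab
        have h2 : ε * dotp z a = ε * dotp z b := by linarith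
        exact mul_left_cancel₀ hεpos.ne' h2
      · exfalso
        have h1 := href b (by exact_mod_cast hb) a (by exact_mod_cast ha) h
        rw [hy'v, hy'v] at hab
        linarith
    have hrV : r ≤ V.card := by omega
    obtain ⟨ℓs, hsinj, hsmem, hsdec, hsout⟩ :=
      exists_sorted_tuple (dotp y') r V hinj' hrV
    have hwdec : ∀ k l : Fin r, k ≤ l → dotp y (ℓs l) ≤ dotp y (ℓs k) := by
      intro k l hkl
      rcases eq_or_lt_of_le hkl with rfl | hlt
      · exact le_rfl
      by_contra hcon
      push_neg at hcon
      have h1 := href _ (hsmem k) _ (hsmem l) hcon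
      have h2 := hsdec k l hlt
      rw [hy'v, hy'v] at h2
      linarith
    have hwout : ∀ b ∈ V, b ∉ Set.range ℓs → ∀ k, dotp y b ≤ dotp y (ℓs k) := by
      intro b hb hbr k
      by_contra hcon
      push_neg at hcon
      have h1 := href _ (hsmem k) _ hb hcon
      have h2 := hsout b hb hbr k
      rw [hy'v, hy'v] at h2
      linarith
    have hFle := F_le V (dotp y) w hww hwpos ℓs ℓ₀ hsinj hsmem
      hℓ₀.1 (fun k => by exact_mod_cast hℓ₀.2 k) hwdec hwout
    have hoeq : oVec w ℓs = x := by
      by_contra hne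
      have hmemS : oVec w ℓs ∈ S :=
        ⟨ℓs, ⟨hsinj, fun k => by exact_mod_cast hsmem k⟩, rfl⟩
      have h1 := hysep _ hmemS hne
      rw [dotp_oVec] at h1
      have h2 : dotp y x = ∑ k, w k * dotp y (ℓ₀ k) := by
        rw [hx₀, dotp_oVec]
      linarith
    refine ⟨ℓs, ⟨⟨hsinj, fun k => by exact_mod_cast hsmem k⟩, y', hsdec, ?_⟩, hoeq.symm⟩
    intro b hb hbr k
    exact hsout b (by exact_mod_cast hb) hbr k
  · rintro ⟨ℓ, ⟨⟨hinj, hmem⟩, y, hind⟩, rfl⟩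
    unfold lineupPolytope
    refine mem_extremePoints_of_strict (y := y) ⟨ℓ, ⟨hinj, hmem⟩, rfl⟩ ?_
    rintro s ⟨ℓ', hT', rfl⟩ hne
    have hne' : ℓ' ≠ ℓ := by rintro rfl; exact hne rfl
    rw [dotp_oVec, dotp_oVec]
    exact F_lt V (dotp y) w hww hwpos ℓ ℓ'
      hinj (fun k => by exact_mod_cast hmem k) hT'.1 (fun k => by exact_mod_cast hT'.2 k)
      hind.1 (fun b hb hbr k => hind.2 b (by exact_mod_cast hb) hbr k) hne'
end
end

section
/- Let V be a finite set of m distinct points in ℝ^d, let 1 ≤ r ≤ m, and let w = (w_1,…,w_r) be a strictly decreasing sequence of r positive real numbers summing to one. For every r-lineup ℓ = (v_{i_1},…,v_{i_r}) of V, the normal cone of the lineup polytope L_{r,w}(V) at the point o_w(ℓ), namely the set {y ∈ ℝ^d : ⟨y, o_w(ℓ)⟩ ≥ ⟨y, x⟩ for all x ∈ L_{r,w}(V)}, equals the closed cone K_V(ℓ) = {y ∈ ℝ^d : ⟨y, v_{i_1}⟩ ≥ ⟨y, v_{i_2}⟩ ≥ ⋯ ≥ ⟨y, v_{i_r}⟩,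 and ⟨y, v_{i_r}⟩ ≥ ⟨y, b⟩ for every b ∈ V ∖ {v_{i_1},…,v_{i_r}}}. -/
noncomputable section

lemma dotp_oVec {d r : ℕ} (y : Fin d → ℝ) (w : Fin r → ℝ) (u : Fin r → Fin d → ℝ) :
    dotp y (oVec w u) = ∑ k, w k * dotp y (u k) := by
  simp only [dotp, oVec, Finset.mul_sum]
  rw [Finset.sum_comm]
  exact Finset.sum_congr rfl fun k _ => Finset.sum_congr rfl fun i _ => by ring

lemma dotp_linear {d : ℕ} (y : Fin d → ℝ) : IsLinearMap ℝ (dotp y) := by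
  constructor
  · intro x z
    simp only [dotp, Pi.add_apply, mul_add, Finset.sum_add_distrib]
  · intro c x
    simp only [dotp, Pi.smul_apply, smul_eq_mul, Finset.mul_sum]
    exact Finset.sum_congr rfl fun i _ => by ring

/-- Abel-summation style lemma. -/
lemma abel_sum : ∀ (n : ℕ) (w a g : ℕ → ℝ),
    (∀ i j : ℕ, i ≤ j → j < n → w j ≤ w i) → (∀ j, j < n → 0 ≤ w j) →
    (∀ k, k < n → ∑ j ∈ Finset.range (k+1), a j ≤ ∑ j ∈ Finset.range (k+1), g j) →
    ∑ j ∈ Finset.range n, w j * a j ≤ ∑ j ∈ Finset.range n, w j * g j := by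
  intro n
  induction n with
  | zero => intro w a g _ _ _; simp
  | succ n ih =>
    intro w a g hmono h0 hps
    have key : ∀ b : ℕ → ℝ, ∑ j ∈ Finset.range (n+1), w j * b j
        = ∑ j ∈ Finset.range n, (w j - w n) * b j + w n * ∑ j ∈ Finset.range (n+1), b j := by
      intro b
      rw [Finset.mul_sum, Finset.sum_range_succ (fun j => w j * b j),
        Finset.sum_range_succ (fun j => w n * b j),
        show ∑ j ∈ Finset.range n, (w j - w n) * b j
          = ∑ j ∈ Finset.range n, (w j * b j - w n * b j) from
          Finset.sum_congr rfl fun j _ => by ring,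
        Finset.sum_sub_distrib]
      ring
    rw [key a, key g]
    have h1 : ∑ j ∈ Finset.range n, (w j - w n) * a j
        ≤ ∑ j ∈ Finset.range n, (w j - w n) * g j := by
      apply ih
      · intro i j hij hj
        have := hmono i j hij (by omega)
        linarith
      · intro j hj
        have := hmono j n (by omega) (by omega)
        linarith
      · intro k hk; exact hps k (by omega)
    have h2 : w n * ∑ j ∈ Finset.range (n+1), a j ≤ w n * ∑ j ∈ Finset.range (n+1), g j :=
      mul_le_mul_of_nonneg_left (hps n (by omega)) (h0 n (by omega))
    linarith

/-- Any `n`-element subset of `V` has `dotp y`-sum at most the sum of the top `n` values. -/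
lemma top_sum {d r : ℕ} (V : Finset (Fin d → ℝ)) (y : Fin d → ℝ)
    (ℓ : Fin r → Fin d → ℝ)
    (hmono : ∀ k l : Fin r, k ≤ l → dotp y (ℓ l) ≤ dotp y (ℓ k))
    (hout : ∀ b ∈ (V : Set (Fin d → ℝ)), b ∉ Set.range ℓ → ∀ k, dotp y b ≤ dotp y (ℓ k)) :
    ∀ n, n ≤ r → ∀ A : Finset (Fin d → ℝ), A ⊆ V → A.card = n →
      ∑ a ∈ A, dotp y a ≤
        ∑ j ∈ Finset.range n, (if h : j < r then dotp y (ℓ ⟨j, h⟩) else 0) := by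
  intro n
  induction n with
  | zero =>
    intro _ A _ hA
    rw [Finset.card_eq_zero.mp hA]
    simp
  | succ n ih =>
    intro hnr A hAV hA
    have hn : n < r := by omega
    have hne : A.Nonempty := Finset.card_pos.mp (by omega)
    obtain ⟨a, haA, hamin⟩ := Finset.exists_min_image A (dotp y) hne
    have hmin : dotp y a ≤ dotp y (ℓ ⟨n, hn⟩) := by
      by_contra hcon
      push_neg at hcon
      have hsub : A ⊆ Finset.image ℓ ((Finset.range n).attachFin
          (fun m hm => lt_trans (Finset.mem_range.mp hm) hn)) := by
        intro b hbA
        have hbV : b ∈ (V : Set (Fin d → ℝ)) := hAV hbA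
        have hgb : dotp y (ℓ ⟨n, hn⟩) < dotp y b := lt_of_lt_of_le hcon (hamin b hbA)
        by_cases hbr : b ∈ Set.range ℓ
        · obtain ⟨j, rfl⟩ := hbr
          have hjn : (j : ℕ) < n := by
            by_contra hj
            push_neg at hj
            exact absurd (hmono ⟨n, hn⟩ j hj) (not_le.mpr hgb)
          exact Finset.mem_image.mpr ⟨j, by
            simp [Finset.mem_attachFin, Finset.mem_range, hjn], rfl⟩
        · exact absurd (hout b hbV hbr ⟨n, hn⟩) (not_le.mpr hgb)
      have hcard : A.card ≤ n := by
        calc A.card ≤ _ := Finset.card_le_card hsub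
        _ ≤ ((Finset.range n).attachFin _).card := Finset.card_image_le
        _ = n := by rw [Finset.card_attachFin, Finset.card_range]
      omega
    have hA' : (A.erase a).card = n := by rw [Finset.card_erase_of_mem haA, hA]; omega
    have hih := ih (by omega) (A.erase a) (fun x hx => hAV (Finset.mem_of_mem_erase hx)) hA'
    have hsum : dotp y a + ∑ x ∈ A.erase a, dotp y x = ∑ x ∈ A, dotp y x :=
      Finset.add_sum_erase A (dotp y) haA
    rw [Finset.sum_range_succ, dif_pos hn]
    linarith

lemma range_dsum_eq {r k : ℕ} (hk : k ≤ r) (F : Fin r → ℝ) :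
    ∑ j ∈ Finset.range k, (if h : j < r then F ⟨j, h⟩ else 0)
      = ∑ j ∈ (Finset.range k).attachFin
          (fun m hm => lt_of_lt_of_le (Finset.mem_range.mp hm) hk), F j := by
  apply Finset.sum_bij' (i := fun m hm => (⟨m, lt_of_lt_of_le (Finset.mem_range.mp hm) hk⟩ : Fin r))
    (j := fun a _ => (a : ℕ))
  case hi => intro a ha; rw [Finset.mem_attachFin]; exact ha
  case hj => intro a ha; rw [Finset.mem_attachFin] at ha; exact ha
  case left_neg => intro a ha; rfl
  case right_neg => intro a ha; rfl
  case h => intro a ha; rw [dif_pos (lt_of_lt_of_le (Finset.mem_range.mp ha) hk)]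

/-- Key inequality: tuples in the weak cone of `ℓ` have smaller weighted value. -/
lemma tuple_value_le {d r : ℕ} (V : Finset (Fin d → ℝ)) (y : Fin d → ℝ)
    (w : Fin r → ℝ) (hww : StrictAnti w) (hwpos : ∀ k, 0 < w k)
    (ℓ : Fin r → Fin d → ℝ)
    (hmono : ∀ k l : Fin r, k ≤ l → dotp y (ℓ l) ≤ dotp y (ℓ k))
    (hout : ∀ b ∈ (V : Set (Fin d → ℝ)), b ∉ Set.range ℓ → ∀ k, dotp y b ≤ dotp y (ℓ k))
    (ℓ' : Fin r → Fin d → ℝ) (hT : IsTupleOf (V : Set (Fin d → ℝ)) ℓ') :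
    ∑ k, w k * dotp y (ℓ' k) ≤ ∑ k, w k * dotp y (ℓ k) := by
  classical
  set wnat : ℕ → ℝ := fun j => if h : j < r then w ⟨j, h⟩ else 0 with hwnat
  set anat : ℕ → ℝ := fun j => if h : j < r then dotp y (ℓ' ⟨j, h⟩) else 0 with hanat
  set gnat : ℕ → ℝ := fun j => if h : j < r then dotp y (ℓ ⟨j, h⟩) else 0 with hgnat
  have hfin : ∀ (u : Fin r → Fin d → ℝ),
      ∑ k, w k * dotp y (u k)
        = ∑ j ∈ Finset.range r, wnat j * (if h : j < r then dotp y (u ⟨j, h⟩) else 0) := by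
    intro u
    rw [← Fin.sum_univ_eq_sum_range (fun j => wnat j * (if h : j < r then dotp y (u ⟨j, h⟩) else 0)) r]
    apply Finset.sum_congr rfl
    intro k _
    simp [hwnat, k.isLt]
  rw [hfin ℓ', hfin ℓ]
  apply abel_sum
  · intro i j hij hj
    simp only [hwnat]
    rw [dif_pos hj, dif_pos (lt_of_le_of_lt hij hj)]
    exact (hww.antitone (by exact_mod_cast hij))
  · intro j hj
    simp only [hwnat]
    rw [dif_pos hj]
    exact le_of_lt (hwpos _)
  · intro k hk
    have hk1 : k + 1 ≤ r := hk
    obtain ⟨hinj', hmem'⟩ := hT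
    -- rewrite LHS as a sum over an image finset
    set B : Finset (Fin r) := (Finset.range (k+1)).attachFin
        (fun m hm => lt_of_lt_of_le (Finset.mem_range.mp hm) hk1) with hB
    have hL : ∑ j ∈ Finset.range (k+1), anat j = ∑ a ∈ B.image ℓ', dotp y a := by
      rw [Finset.sum_image (fun x _ y _ h => hinj' h)]
      exact range_dsum_eq hk1 (fun j => dotp y (ℓ' j))
    have hcardB : (B.image ℓ').card = k + 1 := by
      rw [Finset.card_image_of_injective _ hinj', hB, Finset.card_attachFin,
        Finset.card_range]
    have hsubV : B.image ℓ' ⊆ V := by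
      intro x hx
      obtain ⟨j, _, rfl⟩ := Finset.mem_image.mp hx
      exact hmem' j
    rw [hL]
    exact top_sum V y ℓ hmono hout (k+1) hk1 (B.image ℓ') hsubV hcardB

/-- The normal cone of the lineup polytope at the vertex `o_w(ℓ)` is the closed
cone `K_V(ℓ)` of linear functionals weakly inducing the lineup `ℓ`. -/
theorem normalCone_at_lineup_vertex
    {d m r : ℕ} (V : Finset (Fin d → ℝ)) (hVm : V.card = m)
    (hr1 : 1 ≤ r) (hrm : r ≤ m)
    (w : Fin r → ℝ) (hww : StrictAnti w) (hwpos : ∀ k, 0 < w k)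
    (hwsum : ∑ k, w k = 1)
    (ℓ : Fin r → (Fin d → ℝ)) (hℓ : IsLineup (V : Set (Fin d → ℝ)) ℓ) :
    {y : Fin d → ℝ | ∀ x ∈ lineupPolytope (V : Set (Fin d → ℝ)) w,
        dotp y x ≤ dotp y (oVec w ℓ)} =
      {y : Fin d → ℝ |
        (∀ k l : Fin r, k ≤ l → dotp y (ℓ l) ≤ dotp y (ℓ k)) ∧
        (∀ b ∈ (V : Set (Fin d → ℝ)), b ∉ Set.range ℓ →
          ∀ k, dotp y b ≤ dotp y (ℓ k))} := by
  classical
  obtain ⟨⟨hinj, hmem⟩, -⟩ := hℓ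
  have hgen : ∀ ℓ' : Fin r → Fin d → ℝ, IsTupleOf (V : Set (Fin d → ℝ)) ℓ' →
      oVec w ℓ' ∈ lineupPolytope (V : Set (Fin d → ℝ)) w := fun ℓ' hT =>
    subset_convexHull ℝ _ ⟨ℓ', hT, rfl⟩
  ext y
  simp only [Set.mem_setOf_eq]
  constructor
  · intro h
    constructor
    · -- monotone along the lineup
      intro k l hkl
      rcases eq_or_lt_of_le hkl with rfl | hlt
      · exact le_refl _
      -- swap k and l
      have hT : IsTupleOf (V : Set (Fin d → ℝ)) (ℓ ∘ Equiv.swap k l) :=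
        ⟨hinj.comp (Equiv.swap k l).injective, fun j => hmem _⟩
      have hle := h _ (hgen _ hT)
      rw [dotp_oVec, dotp_oVec] at hle
      have hdiff : ∑ j, w j * dotp y ((ℓ ∘ Equiv.swap k l) j) - ∑ j, w j * dotp y (ℓ j)
          = (w k - w l) * (dotp y (ℓ l) - dotp y (ℓ k)) := by
        rw [← Finset.sum_sub_distrib]
        have hvanish : ∀ j ∈ Finset.univ, j ∉ ({k, l} : Finset (Fin r)) →
            w j * dotp y ((ℓ ∘ Equiv.swap k l) j) - w j * dotp y (ℓ j) = 0 := by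
          intro j _ hj
          simp only [Finset.mem_insert, Finset.mem_singleton, not_or] at hj
          rw [Function.comp_apply, Equiv.swap_apply_of_ne_of_ne hj.1 hj.2, sub_self]
        rw [← Finset.sum_subset (Finset.subset_univ ({k, l} : Finset (Fin r)))
          (fun j _ hj => hvanish j (Finset.mem_univ j) hj)]
        rw [Finset.sum_pair (ne_of_lt hlt)]
        simp only [Function.comp_apply, Equiv.swap_apply_left, Equiv.swap_apply_right]
        ring
      have hw : w l < w k := hww hlt
      nlinarith [hle, hdiff]
    · -- outside points are below
      intro b hbV hbr k
      have hupd : IsTupleOf (V : Set (Fin d → ℝ)) (Function.update ℓ k b) := by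
        constructor
        · intro i j hij
          by_cases hi : i = k <;> by_cases hj : j = k
          · rw [hi, hj]
          · rw [hi, Function.update_self, Function.update_of_ne hj] at hij
            exact absurd ⟨j, hij.symm⟩ hbr
          · rw [hj, Function.update_self, Function.update_of_ne hi] at hij
            exact absurd ⟨i, hij⟩ hbr
          · rw [Function.update_of_ne hi, Function.update_of_ne hj] at hij
            exact hinj hij
        · intro j
          by_cases hj : j = k
          · rw [hj, Function.update_self]; exact hbV
          · rw [Function.update_of_ne hj]; exact hmem j
      have hle := h _ (hgen _ hupd)
      rw [dotp_oVec, dotp_oVec] at hle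
      have hdiff : ∑ j, w j * dotp y (Function.update ℓ k b j) - ∑ j, w j * dotp y (ℓ j)
          = w k * (dotp y b - dotp y (ℓ k)) := by
        rw [← Finset.sum_sub_distrib]
        rw [← Finset.sum_subset (Finset.subset_univ ({k} : Finset (Fin r)))
          (fun j _ hj => by
            rw [Function.update_of_ne (Finset.notMem_singleton.mp hj), sub_self])]
        rw [Finset.sum_singleton, Function.update_self]
        ring
      have hw : 0 < w k := hwpos k
      nlinarith [hle, hdiff]
  · rintro ⟨hmono, hout⟩ x hx
    -- the halfspace is convex and contains all generators
    have hconv : Convex ℝ {x : Fin d → ℝ | dotp y x ≤ dotp y (oVec w ℓ)} :=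
      convex_halfSpace_le (dotp_linear y) _
    have hsub : {x | ∃ ℓ' : Fin r → (Fin d → ℝ),
        IsTupleOf (V : Set (Fin d → ℝ)) ℓ' ∧ x = oVec w ℓ'}
        ⊆ {x : Fin d → ℝ | dotp y x ≤ dotp y (oVec w ℓ)} := by
      rintro x ⟨ℓ', hT, rfl⟩
      simp only [Set.mem_setOf_eq, dotp_oVec]
      exact tuple_value_le V y w hww hwpos ℓ hmono hout ℓ' hT
    exact convexHull_min hsub hconv hx
end
end

section
/- Let V be a finite set of m distinct points in ℝ^d, let 1 ≤ r ≤ m, and let w = (w_1,…,w_r) satisfy w_1 > w_2 > ⋯ > w_r > 0, with the convention w_{r+1} = 0. For 1 ≤ k ≤ m let Q_k(V) denote the k-set polytope of V, i.e. the convex hull of the vectors Σ_{v ∈ I} v over all k-element subsets I ⊆ V. Then the lineup polytope satisfies L_{r,w}(V) = Σ_{k=1}^r (w_k − w_{k+1}) Q_k(V), where the right-hand side is the Minkowski sum of the dilated polytopes (α·Q = {α q : q ∈ Q} and A + B = {a + b : a ∈ A, b ∈ B}). -/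
open Pointwise

noncomputable section

/-- The `k`-set polytope of `V`: the convex hull of the sums of the `k`-element
subsets of `V`. -/
def kSetPolytope {d : ℕ} (V : Finset (Fin d → ℝ)) (k : ℕ) : Set (Fin d → ℝ) :=
  convexHull ℝ {x | ∃ I : Finset (Fin d → ℝ), I ⊆ V ∧ I.card = k ∧ x = ∑ v ∈ I, v}

/-- Abel summation identity. -/
lemma abel_sum' (W x : ℕ → ℝ) (r : ℕ) :
    ∑ k ∈ Finset.range r, (W k - W (k+1)) * (∑ j ∈ Finset.range (k+1), x j)
      = (∑ k ∈ Finset.range r, W k * x k) - W r * (∑ j ∈ Finset.range r, x j) := by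
  induction r with
  | zero => simp
  | succ n ih =>
    rw [Finset.sum_range_succ, ih, Finset.sum_range_succ (f := fun k => W k * x k),
        Finset.sum_range_succ (f := x)]
    ring

/-- A sum of `k` values of a "sorted decreasing" function is at most the sum of
the first `k` values. -/
lemma sum_le_sum_range' {q : ℕ → ℝ} {m : ℕ} (hq : ∀ i j, i ≤ j → j < m → q j ≤ q i)
    {J : Finset ℕ} (hJ : J ⊆ Finset.range m) {k : ℕ} (hk : J.card = k) :
    ∑ j ∈ J, q j ≤ ∑ j ∈ Finset.range k, q j := by
  classical
  set R := Finset.range k with hR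
  have hcard : (J \ R).card = (R \ J).card := by
    have h1 := Finset.card_sdiff_add_card_inter J R
    have h2 := Finset.card_sdiff_add_card_inter R J
    rw [Finset.inter_comm] at h2
    have h3 : R.card = k := Finset.card_range k
    omega
  by_cases hemp : J \ R = ∅
  · have hsub : J ⊆ R := by
      intro a ha
      by_contra hna
      exact (Finset.notMem_empty a) (hemp ▸ Finset.mem_sdiff.2 ⟨ha, hna⟩)
    have : J = R := Finset.eq_of_subset_of_card_le hsub (by simp [hR, hk])
    rw [this]
  · obtain ⟨a0, ha0⟩ := Finset.nonempty_of_ne_empty hemp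
    have ha0J : a0 ∈ J := (Finset.mem_sdiff.1 ha0).1
    have ha0R : a0 ∉ R := (Finset.mem_sdiff.1 ha0).2
    have hka0 : k ≤ a0 := by simpa [hR] using ha0R
    have ha0m : a0 < m := by simpa using hJ ha0J
    have hkm : k < m := lt_of_le_of_lt hka0 ha0m
    have h1 : ∑ j ∈ J \ R, q j ≤ (J \ R).card • q k := by
      apply Finset.sum_le_card_nsmul
      intro x hx
      have hxJ := Finset.mem_sdiff.1 hx
      have : k ≤ x := by simpa [hR] using hxJ.2
      exact hq k x this (by simpa using hJ hxJ.1)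
    have h2 : (R \ J).card • q k ≤ ∑ j ∈ R \ J, q j := by
      apply Finset.card_nsmul_le_sum
      intro x hx
      have hxR := Finset.mem_sdiff.1 hx
      have : x < k := by simpa [hR] using hxR.1
      exact hq x k this.le hkm
    calc ∑ j ∈ J, q j = ∑ j ∈ J ∩ R, q j + ∑ j ∈ J \ R, q j :=
          (Finset.sum_inter_add_sum_sdiff J R q).symm
      _ ≤ ∑ j ∈ J ∩ R, q j + ∑ j ∈ R \ J, q j :=
          add_le_add le_rfl (le_trans h1 (hcard ▸ h2))
      _ = ∑ j ∈ R ∩ J, q j + ∑ j ∈ R \ J, q j := by rw [Finset.inter_comm]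
      _ = ∑ j ∈ R, q j := Finset.sum_inter_add_sum_sdiff R J q

/-- Convex hull commutes with Minkowski sums of dilates. -/
lemma convexHull_finset_sum' {ι : Type*} {E : Type*} [AddCommGroup E] [Module ℝ E]
    (s : Finset ι) (a : ι → ℝ) (S : ι → Set E) :
    ∑ i ∈ s, a i • convexHull ℝ (S i) = convexHull ℝ (∑ i ∈ s, a i • S i) := by
  classical
  induction s using Finset.cons_induction with
  | empty => simp [show (0 : Set E) = ({0} : Set E) from rfl]
  | cons i s hi ih =>
    rw [Finset.sum_cons, Finset.sum_cons, ih, ← convexHull_smul, ← convexHull_add]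

/-- The lineup polytope is the Minkowski sum of the dilated `k`-set polytopes,
with coefficients `w_k - w_{k+1}` (convention `w_{r+1} = 0`). -/
theorem lineupPolytope_eq_minkowski_sum_kSetPolytopes
    {d m r : ℕ} (V : Finset (Fin d → ℝ)) (hVm : V.card = m)
    (hr1 : 1 ≤ r) (hrm : r ≤ m)
    (w : Fin r → ℝ) (hww : StrictAnti w) (hwpos : ∀ k, 0 < w k) :
    lineupPolytope (V : Set (Fin d → ℝ)) w =
      ∑ k : Fin r,
        (w k - if h : (k : ℕ) + 1 < r then w ⟨(k : ℕ) + 1, h⟩ else 0) •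
          kSetPolytope V ((k : ℕ) + 1) := by
  classical
  set W : ℕ → ℝ := fun n => if h : n < r then w ⟨n, h⟩ else 0 with hWdef
  have hWfin : ∀ k : Fin r, W (k : ℕ) = w k := by
    intro k; simp [hWdef, k.isLt]
  have hWr : W r = 0 := by simp [hWdef]
  have key : ∀ x : ℕ → ℝ,
      ∑ k ∈ Finset.range r, (W k - W (k+1)) * (∑ j ∈ Finset.range (k+1), x j)
        = ∑ k ∈ Finset.range r, W k * x k := by
    intro x; rw [abel_sum', hWr]; ring
  have hcpos : ∀ k : Fin r, 0 < W (k : ℕ) - W ((k : ℕ)+1) := by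
    intro k
    rw [hWfin]
    by_cases h : (k : ℕ) + 1 < r
    · have h1 : w ⟨(k : ℕ)+1, h⟩ < w k := hww (by simp [Fin.lt_def])
      simp only [hWdef, dif_pos h]
      linarith
    · simp only [hWdef, dif_neg h, sub_zero]
      exact hwpos k
  set T : Set (Fin d → ℝ) :=
    {x | ∃ ℓ : Fin r → (Fin d → ℝ), IsTupleOf (V : Set (Fin d → ℝ)) ℓ ∧ x = oVec w ℓ}
    with hTdef
  set Gen : Fin r → Set (Fin d → ℝ) :=
    fun k => {x | ∃ I : Finset (Fin d → ℝ), I ⊆ V ∧ I.card = (k : ℕ)+1 ∧ x = ∑ v ∈ I, v}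
    with hGdef
  have hL : lineupPolytope (V : Set (Fin d → ℝ)) w = convexHull ℝ T := rfl
  have hKS : ∀ k : Fin r, kSetPolytope V ((k : ℕ)+1) = convexHull ℝ (Gen k) := fun _ => rfl
  have hRHS : (∑ k : Fin r,
        (w k - if h : (k : ℕ) + 1 < r then w ⟨(k : ℕ) + 1, h⟩ else 0) •
          kSetPolytope V ((k : ℕ) + 1))
      = convexHull ℝ (∑ k : Fin r, (W (k : ℕ) - W ((k : ℕ)+1)) • Gen k) := by
    rw [← convexHull_finset_sum']
    apply Finset.sum_congr rfl
    intro k _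
    rw [hKS]
    congr 1
    rw [hWfin]
  -- Abel summation for weighted vectors
  have habel : ∀ ℓ : Fin r → (Fin d → ℝ),
      oVec w ℓ = ∑ k : Fin r, (W (k : ℕ) - W ((k : ℕ)+1)) •
        (∑ j : Fin ((k : ℕ)+1), ℓ (Fin.castLE k.isLt j)) := by
    intro ℓ
    funext i
    set x' : ℕ → ℝ := fun n => if h : n < r then ℓ ⟨n, h⟩ i else 0 with hx'
    have hs : ∀ k : Fin r, (∑ j : Fin ((k : ℕ)+1), ℓ (Fin.castLE k.isLt j)) i
        = ∑ j ∈ Finset.range ((k : ℕ)+1), x' j := by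
      intro k
      rw [Finset.sum_apply, ← Fin.sum_univ_eq_sum_range x' ((k : ℕ)+1)]
      apply Finset.sum_congr rfl
      intro j _
      have hj : (j : ℕ) < r := lt_of_lt_of_le j.isLt k.isLt
      simp only [hx', dif_pos hj]
      rfl
    calc oVec w ℓ i = ∑ k : Fin r, W (k : ℕ) * x' (k : ℕ) := by
          apply Finset.sum_congr rfl
          intro k _
          simp [hWdef, hx', k.isLt]
      _ = ∑ n ∈ Finset.range r, W n * x' n :=
          Fin.sum_univ_eq_sum_range (fun n => W n * x' n) r
      _ = ∑ n ∈ Finset.range r, (W n - W (n+1)) * ∑ j ∈ Finset.range (n+1), x' j :=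
          (key x').symm
      _ = ∑ k : Fin r, (W (k : ℕ) - W ((k : ℕ)+1)) * ∑ j ∈ Finset.range ((k : ℕ)+1), x' j :=
          (Fin.sum_univ_eq_sum_range
            (fun n => (W n - W (n+1)) * ∑ j ∈ Finset.range (n+1), x' j) r).symm
      _ = (∑ k : Fin r, (W (k : ℕ) - W ((k : ℕ)+1)) •
            (∑ j : Fin ((k : ℕ)+1), ℓ (Fin.castLE k.isLt j))) i := by
          rw [Finset.sum_apply]
          apply Finset.sum_congr rfl
          intro k _
          rw [Pi.smul_apply, smul_eq_mul, hs k]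
  -- forward inclusion
  have hTG : T ⊆ ∑ k : Fin r, (W (k : ℕ) - W ((k : ℕ)+1)) • Gen k := by
    rintro x ⟨ℓ, ⟨hinj, hmem⟩, rfl⟩
    rw [habel ℓ]
    apply Set.finset_sum_mem_finset_sum
    intro k _
    apply Set.smul_mem_smul_set
    refine ⟨Finset.image (fun j => ℓ (Fin.castLE k.isLt j)) Finset.univ, ?_, ?_, ?_⟩
    · intro v hv
      simp only [Finset.mem_image] at hv
      obtain ⟨j, _, rfl⟩ := hv
      simpa using hmem _
    · rw [Finset.card_image_of_injOn fun a _ b _ h => Fin.castLE_injective _ (hinj h)]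
      simp
    · rw [Finset.sum_image (by
        intro a _ b _ hab
        exact Fin.castLE_injective _ (hinj hab))]
  -- reverse inclusion
  have hGT : (∑ k : Fin r, (W (k : ℕ) - W ((k : ℕ)+1)) • Gen k) ⊆ convexHull ℝ T := by
    intro p hp
    by_contra hpc
    have hTfin : T.Finite := by
      have hsub : T ⊆ (fun ℓ => oVec w ℓ) ''
          (Set.univ.pi fun _ : Fin r => (V : Set (Fin d → ℝ))) := by
        rintro x ⟨ℓ, ⟨hinj, hmem⟩, rfl⟩
        exact ⟨ℓ, by simpa [Set.mem_univ_pi] using hmem, rfl⟩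
      exact Set.Finite.subset ((Set.Finite.pi fun _ => V.finite_toSet).image _) hsub
    obtain ⟨φ, u, hφ1, hφ2⟩ := geometric_hahn_banach_closed_point
      (convex_convexHull ℝ T) (hTfin.isCompact_convexHull (𝕜 := ℝ)).isClosed hpc
    rw [Set.mem_finset_sum] at hp
    obtain ⟨gg, hgg, hsum⟩ := hp
    have hex : ∀ k : Fin r, ∃ y, y ∈ Gen k ∧ (W (k : ℕ) - W ((k : ℕ)+1)) • y = gg k := by
      intro k
      exact Set.mem_smul_set.1 (hgg (Finset.mem_univ k))
    choose y hy hgy using hex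
    choose I hIsub hIcard hIsum using fun k => hy k
    -- the sorted list of V
    set l : List (Fin d → ℝ) := V.toList.mergeSort (fun a b => decide (φ b ≤ φ a)) with hl
    have hperm : l.Perm V.toList := List.mergeSort_perm V.toList _
    have hlen : l.length = m := by rw [hperm.length_eq, Finset.length_toList, hVm]
    have hnodup : l.Nodup := hperm.nodup_iff.2 V.nodup_toList
    have hlmem : ∀ x, x ∈ l ↔ x ∈ V := by
      intro x; rw [hperm.mem_iff, Finset.mem_toList]
    have hsorted : l.Pairwise (fun a b => decide (φ b ≤ φ a) = true) := by
      rw [hl]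
      exact List.pairwise_mergeSort (le := fun a b => decide (φ b ≤ φ a))
        (fun a b c hab hbc => decide_eq_true
          (le_trans (of_decide_eq_true hbc) (of_decide_eq_true hab)))
        (fun a b => by rcases le_total (φ b) (φ a) with h | h <;> simp [h])
        V.toList
    set q : ℕ → ℝ := fun j => φ (l.getD j 0) with hq
    have hmono : ∀ i j, i ≤ j → j < m → q j ≤ q i := by
      intro i j hij hjm
      rcases eq_or_lt_of_le hij with rfl | hlt
      · exact le_rfl
      · have hjl : j < l.length := hlen ▸ hjm
        have hil : i < l.length := lt_trans hlt hjl
        have hR := List.pairwise_iff_get.1 hsorted ⟨i, hil⟩ ⟨j, hjl⟩ hlt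
        have h2 := of_decide_eq_true hR
        simpa [hq, List.getD_eq_getElem l 0 hil, List.getD_eq_getElem l 0 hjl,
          List.getElem?_eq_getElem hil, List.getElem?_eq_getElem hjl] using h2
    have htop : ∀ k : Fin r, φ (y k) ≤ ∑ j ∈ Finset.range ((k : ℕ)+1), q j := by
      intro k
      have hφy : φ (y k) = ∑ v ∈ I k, φ v := by rw [hIsum k, map_sum]
      have hIl : ∀ v ∈ I k, v ∈ l := fun v hv => (hlmem v).2 (hIsub k hv)
      have hinj2 : ∀ a ∈ I k, ∀ b ∈ I k, l.idxOf a = l.idxOf b → a = b := by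
        intro a ha b hb hab
        have h1 : l.idxOf a < l.length := List.idxOf_lt_length_iff.2 (hIl a ha)
        have h2 : l.idxOf b < l.length := List.idxOf_lt_length_iff.2 (hIl b hb)
        rw [← List.getElem_idxOf h1, ← List.getElem_idxOf h2]
        simp only [hab]
      have hJcard : ((I k).image (fun v => l.idxOf v)).card = (k : ℕ)+1 := by
        rw [Finset.card_image_of_injOn
          (fun a ha b hb h => hinj2 a (by simpa using ha) b (by simpa using hb) h),
          hIcard k]
      have hJsub : (I k).image (fun v => l.idxOf v) ⊆ Finset.range m := by
        intro j hj
        simp only [Finset.mem_image] at hj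
        obtain ⟨v, hv, rfl⟩ := hj
        rw [Finset.mem_range, ← hlen]
        exact List.idxOf_lt_length_iff.2 (hIl v hv)
      have hsumJ : ∑ j ∈ (I k).image (fun v => l.idxOf v), q j = ∑ v ∈ I k, φ v := by
        rw [Finset.sum_image hinj2]
        apply Finset.sum_congr rfl
        intro v hv
        have h1 : l.idxOf v < l.length := List.idxOf_lt_length_iff.2 (hIl v hv)
        simp [hq, List.getD_eq_getElem l 0 h1, List.getElem?_eq_getElem h1, List.getElem_idxOf h1]
      rw [hφy, ← hsumJ]
      exact sum_le_sum_range' hmono hJsub hJcard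
    -- the optimal tuple
    have hrl : r ≤ l.length := by rw [hlen]; exact hrm
    set ℓs : Fin r → (Fin d → ℝ) := fun k => l.get (Fin.castLE hrl k) with hℓs
    have hℓinj : Function.Injective ℓs :=
      (List.nodup_iff_injective_get.1 hnodup).comp (Fin.castLE_injective hrl)
    have hℓmem : ∀ k, ℓs k ∈ (V : Set (Fin d → ℝ)) := by
      intro k
      have hm1 : ℓs k ∈ l := List.get_mem l _
      simpa using (hlmem _).1 hm1
    have hoT : oVec w ℓs ∈ convexHull ℝ T :=
      subset_convexHull ℝ T ⟨ℓs, ⟨hℓinj, hℓmem⟩, rfl⟩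
    have hφo : φ (oVec w ℓs) = ∑ n ∈ Finset.range r, W n * q n := by
      have h1 : oVec w ℓs = ∑ k : Fin r, w k • ℓs k := by
        funext i; simp [oVec, Finset.sum_apply]
      rw [h1, map_sum, ← Fin.sum_univ_eq_sum_range (fun n => W n * q n) r]
      apply Finset.sum_congr rfl
      intro k _
      have hkm : (k : ℕ) < l.length := lt_of_lt_of_le k.isLt hrl
      rw [map_smul, smul_eq_mul, hWfin]
      congr 1
      simp [hq, hℓs, List.getD_eq_getElem l 0 hkm, List.getElem?_eq_getElem hkm]
    have hφp : φ p = ∑ k : Fin r, (W (k : ℕ) - W ((k : ℕ)+1)) * φ (y k) := by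
      rw [← hsum, map_sum]
      apply Finset.sum_congr rfl
      intro k _
      rw [← hgy k, map_smul, smul_eq_mul]
    have hle : φ p ≤ φ (oVec w ℓs) := by
      rw [hφp, hφo, ← key q, ← Fin.sum_univ_eq_sum_range
        (fun n => (W n - W (n+1)) * ∑ j ∈ Finset.range (n+1), q j) r]
      apply Finset.sum_le_sum
      intro k _
      exact mul_le_mul_of_nonneg_left (htop k) (hcpos k).le
    exact lt_irrefl (φ p) ((hle.trans_lt (hφ1 _ hoT)).trans hφ2)
  rw [hL, hRHS]
  exact Set.Subset.antisymm (convexHull_mono hTG)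
    (convexHull_min hGT (convex_convexHull ℝ T))

end
end

section
/- Let V be a finite subset of the fundamental chamber Φ_d = {y ∈ ℝ^d : y_1 ≥ ⋯ ≥ y_d}, let P = Perm(V) be the S_d-invariant polytope generated by V, and let y ∈ Φ_d. Set M = max_{x ∈ P} ⟨y, x⟩, V_y = {v ∈ V : ⟨y, v⟩ = M}, and let Stab(y) = {π ∈ S_d : y_{π(i)} = y_i for all i} be the stabilizer of y. Then the exposed face P^y = {x ∈ P : ⟨y, x⟩ = M} equals the convex hull of the set {π·v : π ∈ Stab(y), v ∈ V_y}. -/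
noncomputable section

/-- `y` is a fundamental vector: its coordinates are weakly decreasing. -/
def Fund {d : ℕ} (y : Fin d → ℝ) : Prop := ∀ i j : Fin d, i ≤ j → y j ≤ y i

/-- The action of a permutation on `ℝ^d`: `(π·x)_i = x_{π⁻¹(i)}`. -/
def permAct {d : ℕ} (π : Equiv.Perm (Fin d)) (x : Fin d → ℝ) : Fin d → ℝ :=
  fun i => x (π⁻¹ i)

/-- The `S_d`-invariant polytope `Perm(V)`: the convex hull of the orbit of `V`
under the permutation action. -/
def permPolytope {d : ℕ} (V : Set (Fin d → ℝ)) : Set (Fin d → ℝ) :=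
  convexHull ℝ {x | ∃ π : Equiv.Perm (Fin d), ∃ v ∈ V, x = permAct π v}

/-- The exposed face of `P` in direction `y`: the set of maximizers of `⟨y,·⟩` on `P`. -/
def faceAt {d : ℕ} (P : Set (Fin d → ℝ)) (y : Fin d → ℝ) : Set (Fin d → ℝ) :=
  {x ∈ P | ∀ z ∈ P, dotp y z ≤ dotp y x}

open Finset

namespace FacePerm

variable {d : ℕ}

lemma dotp_permAct (y v : Fin d → ℝ) (π : Equiv.Perm (Fin d)) :
    dotp y (permAct π v) = ∑ i, y (π i) * v i := by
  rw [dotp]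
  exact (Fintype.sum_equiv π (fun i => y (π i) * v i) (fun i => y i * v (π⁻¹ i))
    (fun i => by simp [permAct])).symm

lemma monovary_fund {y v : Fin d → ℝ} (hy : Fund y) (hv : Fund v) : Monovary y v := by
  intro i j hij
  have hji : j ≤ i := by
    by_contra h
    push_neg at h
    exact absurd (hv i j h.le) (not_le.2 hij)
  exact hy j i hji

lemma dotp_permAct_le {y v : Fin d → ℝ} (hy : Fund y) (hv : Fund v) (π : Equiv.Perm (Fin d)) :
    dotp y (permAct π v) ≤ dotp y v := by
  rw [dotp_permAct]
  exact (monovary_fund hy hv).sum_comp_perm_mul_le_sum_mul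

lemma lowerset_eq_pre (S : Finset (Fin d)) (hS : ∀ i j : Fin d, i ≤ j → j ∈ S → i ∈ S) :
    S = univ.filter (fun i : Fin d => (i : ℕ) < S.card) := by
  ext i
  simp only [mem_filter, mem_univ, true_and]
  constructor
  · intro hi
    have h1 : Finset.Iic i ⊆ S := fun j hj => hS j i (Finset.mem_Iic.1 hj) hi
    have := Finset.card_le_card h1
    rw [Fin.card_Iic] at this
    omega
  · intro hi
    by_contra hiS
    have h2 : S ⊆ Finset.Iio i := by
      intro j hj
      rw [Finset.mem_Iio]
      by_contra h
      push_neg at h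
      exact hiS (hS i j h hj)
    have := Finset.card_le_card h2
    rw [Fin.card_Iio] at this
    omega

lemma multiset_split_eq (A₁ B₁ A₂ B₂ : Multiset ℝ)
    (h : A₁ + B₁ = A₂ + B₂) (hc : Multiset.card A₁ = Multiset.card A₂)
    (h1 : ∀ x ∈ A₁, ∀ z ∈ B₁, z ≤ x) (h2 : ∀ x ∈ A₂, ∀ z ∈ B₂, z ≤ x) :
    A₁ = A₂ := by
  classical
  set l₁ := B₁.sort (· ≤ ·) with hl₁
  set m₁ := A₁.sort (· ≤ ·) with hm₁
  set l₂ := B₂.sort (· ≤ ·) with hl₂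
  set m₂ := A₂.sort (· ≤ ·) with hm₂
  have hs1 : List.Pairwise (· ≤ ·) (l₁ ++ m₁) := by
    rw [List.pairwise_append]
    exact ⟨B₁.pairwise_sort _, A₁.pairwise_sort _,
      fun a ha b hb => h1 b (Multiset.mem_sort _ |>.1 hb) a (Multiset.mem_sort _ |>.1 ha)⟩
  have hs2 : List.Pairwise (· ≤ ·) (l₂ ++ m₂) := by
    rw [List.pairwise_append]
    exact ⟨B₂.pairwise_sort _, A₂.pairwise_sort _,
      fun a ha b hb => h2 b (Multiset.mem_sort _ |>.1 hb) a (Multiset.mem_sort _ |>.1 ha)⟩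
  have hperm : List.Perm (l₁ ++ m₁) (l₂ ++ m₂) := by
    rw [← Multiset.coe_eq_coe, ← Multiset.coe_add, ← Multiset.coe_add,
      Multiset.sort_eq, Multiset.sort_eq, Multiset.sort_eq, Multiset.sort_eq]
    rw [add_comm A₁ B₁] at h
    rw [add_comm A₂ B₂] at h
    exact h
  have heq : l₁ ++ m₁ = l₂ ++ m₂ := List.Perm.eq_of_pairwise' hs1 hs2 hperm
  have hcB : Multiset.card B₁ = Multiset.card B₂ := by
    have := congrArg Multiset.card h
    simp only [Multiset.card_add] at this
    omega
  have hlen : l₁.length = l₂.length := by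
    simp only [hl₁, hl₂, Multiset.length_sort, hcB]
  have := List.append_inj heq hlen
  calc A₁ = (m₁ : Multiset ℝ) := (Multiset.sort_eq _ _).symm
    _ = (m₂ : Multiset ℝ) := by rw [this.2]
    _ = A₂ := Multiset.sort_eq _ _

lemma map_univ_perm (f : Fin d → ℝ) (σ : Equiv.Perm (Fin d)) :
    Multiset.map (f ∘ σ) (univ : Finset (Fin d)).val = Multiset.map f (univ : Finset (Fin d)).val := by
  rw [← Multiset.map_map]
  congr 1
  have := congrArg Finset.val (Finset.map_univ_equiv σ)
  rwa [Finset.map_val, Equiv.coe_toEmbedding] at this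

lemma prefix_multiset_eq {g v yy : Fin d → ℝ}
    (hperm : Multiset.map g (univ : Finset (Fin d)).val = Multiset.map yy (univ : Finset (Fin d)).val)
    (hy : Fund yy) (mono : Monovary g v) (t : ℕ)
    (hb : ∀ i j : Fin d, (i : ℕ) < t → t ≤ (j : ℕ) → v j < v i) :
    Multiset.map g ((univ.filter (fun i : Fin d => (i : ℕ) < t)).val)
      = Multiset.map yy ((univ.filter (fun i : Fin d => (i : ℕ) < t)).val) := by
  classical
  set A := (univ.filter (fun i : Fin d => (i : ℕ) < t)).val with hA
  set B := (univ.filter (fun i : Fin d => ¬ (i : ℕ) < t)).val with hB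
  have hAB : A + B = (univ : Finset (Fin d)).val := by
    rw [hA, hB, Finset.filter_val, Finset.filter_val]
    exact Multiset.filter_add_not _ _
  refine multiset_split_eq _ (Multiset.map g B) _ (Multiset.map yy B) ?_ ?_ ?_ ?_
  · rw [← Multiset.map_add, hAB, ← Multiset.map_add, hAB, hperm]
  · simp
  · intro x hx z hz
    obtain ⟨i, hi, rfl⟩ := Multiset.mem_map.1 hx
    obtain ⟨j, hj, rfl⟩ := Multiset.mem_map.1 hz
    rw [hA, Finset.mem_val, Finset.mem_filter] at hi
    rw [hB, Finset.mem_val, Finset.mem_filter] at hj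
    exact mono (hb i j hi.2 (by omega))
  · intro x hx z hz
    obtain ⟨i, hi, rfl⟩ := Multiset.mem_map.1 hx
    obtain ⟨j, hj, rfl⟩ := Multiset.mem_map.1 hz
    rw [hA, Finset.mem_val, Finset.mem_filter] at hi
    rw [hB, Finset.mem_val, Finset.mem_filter] at hj
    have hij : i ≤ j := by
      have : (i : ℕ) ≤ (j : ℕ) := by omega
      exact this
    exact hy i j hij

lemma block_multiset_eq {g v yy : Fin d → ℝ}
    (hperm : Multiset.map g (univ : Finset (Fin d)).val = Multiset.map yy (univ : Finset (Fin d)).val)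
    (hy : Fund yy) (hv : Fund v) (mono : Monovary g v) (c : ℝ) :
    Multiset.map g ((univ.filter (fun i : Fin d => v i = c)).val)
      = Multiset.map yy ((univ.filter (fun i : Fin d => v i = c)).val) := by
  classical
  set S₁ := univ.filter (fun i : Fin d => c < v i) with hS₁
  set S₂ := univ.filter (fun i : Fin d => c ≤ v i) with hS₂
  have hS₁mem : ∀ i : Fin d, i ∈ S₁ ↔ c < v i := by
    intro i; simp [hS₁]
  have hS₂mem : ∀ i : Fin d, i ∈ S₂ ↔ c ≤ v i := by
    intro i; simp [hS₂]
  have hlow₁ : S₁ = univ.filter (fun i : Fin d => (i : ℕ) < S₁.card) :=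
    lowerset_eq_pre _ (fun i j hij hj => (hS₁mem i).2 (lt_of_lt_of_le ((hS₁mem j).1 hj) (hv i j hij)))
  have hlow₂ : S₂ = univ.filter (fun i : Fin d => (i : ℕ) < S₂.card) :=
    lowerset_eq_pre _ (fun i j hij hj => (hS₂mem i).2 (le_trans ((hS₂mem j).1 hj) (hv i j hij)))
  have hb₁ : ∀ i j : Fin d, (i : ℕ) < S₁.card → S₁.card ≤ (j : ℕ) → v j < v i := by
    intro i j hi hj
    have hiS : i ∈ S₁ := by rw [hlow₁]; simp [hi]
    have hjS : j ∉ S₁ := by rw [hlow₁]; simp; omega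
    have := (hS₁mem i).1 hiS
    have h2 : ¬ c < v j := fun h => hjS ((hS₁mem j).2 h)
    push_neg at h2
    exact lt_of_le_of_lt h2 this
  have hb₂ : ∀ i j : Fin d, (i : ℕ) < S₂.card → S₂.card ≤ (j : ℕ) → v j < v i := by
    intro i j hi hj
    have hiS : i ∈ S₂ := by rw [hlow₂]; simp [hi]
    have hjS : j ∉ S₂ := by rw [hlow₂]; simp; omega
    have := (hS₂mem i).1 hiS
    have h2 : ¬ c ≤ v j := fun h => hjS ((hS₂mem j).2 h)
    push_neg at h2
    exact lt_of_lt_of_le h2 this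
  have hpre₁ := prefix_multiset_eq hperm hy mono S₁.card hb₁
  have hpre₂ := prefix_multiset_eq hperm hy mono S₂.card hb₂
  rw [← hlow₁] at hpre₁
  rw [← hlow₂] at hpre₂
  -- decompose S₂ = S₁ + block
  have hdec : S₂.val = S₁.val + (univ.filter (fun i : Fin d => v i = c)).val := by
    rw [hS₁, hS₂, Finset.filter_val, Finset.filter_val, Finset.filter_val]
    have := Multiset.filter_add_filter (fun i : Fin d => c < v i) (fun i : Fin d => v i = c)
      (univ : Finset (Fin d)).val
    have hnil : Multiset.filter (fun a : Fin d => c < v a ∧ v a = c) (univ : Finset (Fin d)).val = 0 :=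
      Multiset.filter_eq_nil.2 (fun a _ ha => absurd ha.2 (ne_of_gt ha.1))
    rw [hnil, add_zero] at this
    rw [this]
    apply Multiset.filter_congr
    intro x _
    constructor
    · intro h; rcases lt_or_eq_of_le h with h' | h'
      · exact Or.inl h'
      · exact Or.inr h'.symm
    · intro h; rcases h with h | h
      · exact le_of_lt h
      · exact le_of_eq h.symm
  have := hpre₂
  rw [hdec, Multiset.map_add, Multiset.map_add, hpre₁] at this
  exact add_left_cancel this

lemma exists_alpha {g v yy : Fin d → ℝ}
    (hperm : Multiset.map g (univ : Finset (Fin d)).val = Multiset.map yy (univ : Finset (Fin d)).val)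
    (hy : Fund yy) (hv : Fund v) (mono : Monovary g v) :
    ∃ α : Equiv.Perm (Fin d), (∀ i, v (α i) = v i) ∧ (∀ i, yy (α i) = g i) := by
  classical
  have hcount : ∀ (f : Fin d → ℝ) (p : ℝ × ℝ),
      (univ.filter (fun i : Fin d => (f i, v i) = p)).card
        = Multiset.count p.1 (Multiset.map f ((univ.filter (fun i : Fin d => v i = p.2)).val)) := by
    intro f p
    rw [Multiset.count_map]
    rw [Finset.filter_val, Multiset.filter_filter]
    rw [Finset.card, Finset.filter_val]
    congr 1
    apply Multiset.filter_congr
    intro x _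
    rw [Prod.ext_iff]
    constructor
    · intro h; exact ⟨h.1.symm, h.2⟩
    · intro h; exact ⟨h.1.symm, h.2⟩
  have hcard : ∀ p : ℝ × ℝ,
      Fintype.card {i : Fin d // (g i, v i) = p} = Fintype.card {i : Fin d // (yy i, v i) = p} := by
    intro p
    rw [Fintype.card_subtype, Fintype.card_subtype, hcount g p, hcount yy p,
      block_multiset_eq hperm hy hv mono p.2]
  let e : ∀ p : ℝ × ℝ, {i : Fin d // (g i, v i) = p} ≃ {i : Fin d // (yy i, v i) = p} :=
    fun p => Fintype.equivOfCardEq (hcard p)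
  refine ⟨Equiv.ofFiberEquiv e, ?_, ?_⟩
  · intro i
    have := Equiv.ofFiberEquiv_map e i
    exact (Prod.ext_iff.1 this).2
  · intro i
    have := Equiv.ofFiberEquiv_map e i
    exact (Prod.ext_iff.1 this).1

lemma exists_stab {y v : Fin d → ℝ} (hy : Fund y) (hv : Fund v) (σ : Equiv.Perm (Fin d))
    (h : dotp y (permAct σ v) = dotp y v) :
    ∃ τ : Equiv.Perm (Fin d), (∀ i, y (τ i) = y i) ∧ permAct τ v = permAct σ v := by
  rw [dotp_permAct] at h
  have h' : ∑ i, y (σ i) * v i = ∑ i, y i * v i := h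
  have mono : Monovary (y ∘ σ) v :=
    ((monovary_fund hy hv).sum_comp_perm_mul_eq_sum_mul_iff).1 h'
  obtain ⟨α, hαv, hαy⟩ := exists_alpha (map_univ_perm y σ) hy hv mono
  refine ⟨σ * α⁻¹, ?_, ?_⟩
  · intro i
    have := hαy (α⁻¹ i)
    simp only [Equiv.apply_symm_apply, Function.comp_apply] at this ⊢
    simp only [Equiv.Perm.mul_apply]
    rw [← this]
    simp
  · funext i
    simp only [permAct, mul_inv_rev, Equiv.Perm.mul_apply, inv_inv]
    exact hαv (σ⁻¹ i)

lemma dotp_sum_smul (y : Fin d → ℝ) {ι : Type} (t : Finset ι) (w : ι → ℝ) (z : ι → Fin d → ℝ) :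
    dotp y (∑ i ∈ t, w i • z i) = ∑ i ∈ t, w i * dotp y (z i) := by
  simp only [dotp, Finset.sum_apply, Pi.smul_apply, smul_eq_mul, Finset.mul_sum]
  rw [Finset.sum_comm]
  exact Finset.sum_congr rfl fun i _ => Finset.sum_congr rfl fun j _ => by ring

lemma dotp_combo (y u w : Fin d → ℝ) (a b : ℝ) :
    dotp y (a • u + b • w) = a * dotp y u + b * dotp y w := by
  simp only [dotp, Pi.add_apply, Pi.smul_apply, smul_eq_mul, mul_add, Finset.sum_add_distrib,
    Finset.mul_sum]
  congr 1 <;> exact Finset.sum_congr rfl fun j _ => by ring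

end FacePerm

open FacePerm

/-- The exposed face of the symmetric polytope `Perm(V)` in a fundamental direction `y`
is the convex hull of the orbit of the maximizing generators under the stabilizer of `y`. -/
theorem face_permPolytope_eq_convexHull_stabilizer_orbit
    {d : ℕ} (V : Finset (Fin d → ℝ)) (hVf : ∀ v ∈ V, Fund v)
    (y : Fin d → ℝ) (hy : Fund y) :
    faceAt (permPolytope (V : Set (Fin d → ℝ))) y =
      convexHull ℝ {x | ∃ π : Equiv.Perm (Fin d), (∀ i, y (π i) = y i) ∧
        ∃ v ∈ V, (∀ z ∈ permPolytope (V : Set (Fin d → ℝ)), dotp y z ≤ dotp y v) ∧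
          x = permAct π v} := by
  classical
  set P := permPolytope (V : Set (Fin d → ℝ)) with hP
  set S : Set (Fin d → ℝ) :=
    {x | ∃ π : Equiv.Perm (Fin d), ∃ v ∈ (V : Set (Fin d → ℝ)), x = permAct π v} with hS
  have hPS : P = convexHull ℝ S := rfl
  apply Set.Subset.antisymm
  · intro x hx
    obtain ⟨hxP, hxmax⟩ := hx
    have hxP' := hxP
    rw [hPS, _root_.convexHull_eq] at hxP'
    obtain ⟨ι, t, w, z, hw0, hw1, hz, hcm⟩ := hxP'
    have hxsum : x = ∑ i ∈ t, w i • z i := by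
      rw [← hcm, Finset.centerMass_eq_of_sum_1 _ _ hw1]
    have hzP : ∀ i ∈ t, z i ∈ P := fun i hi => subset_convexHull ℝ S (hz i hi)
    have hzle : ∀ i ∈ t, dotp y (z i) ≤ dotp y x := fun i hi => hxmax (z i) (hzP i hi)
    have hdx : dotp y x = ∑ i ∈ t, w i * dotp y (z i) := by
      conv_lhs => rw [hxsum]
      exact dotp_sum_smul y t w z
    have hzero : ∑ i ∈ t, w i * (dotp y x - dotp y (z i)) = 0 := by
      have hA : ∑ i ∈ t, w i * dotp y x = dotp y x := by
        rw [← Finset.sum_mul, hw1, one_mul]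
      have : ∑ i ∈ t, w i * (dotp y x - dotp y (z i))
          = ∑ i ∈ t, (w i * dotp y x - w i * dotp y (z i)) :=
        Finset.sum_congr rfl fun i _ => by ring
      rw [this, Finset.sum_sub_distrib, hA, ← hdx, sub_self]
    have hkey : ∀ i ∈ t, w i ≠ 0 → dotp y (z i) = dotp y x := by
      intro i hi hwi
      have hnn : ∀ j ∈ t, 0 ≤ w j * (dotp y x - dotp y (z j)) :=
        fun j hj => mul_nonneg (hw0 j hj) (sub_nonneg.2 (hzle j hj))
      have h0 := (Finset.sum_eq_zero_iff_of_nonneg hnn).1 hzero i hi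
      have hwpos : 0 < w i := lt_of_le_of_ne (hw0 i hi) (Ne.symm hwi)
      nlinarith [h0]
    set t' := t.filter (fun i => w i ≠ 0) with ht'
    have hsum' : ∑ i ∈ t', w i = 1 := by
      rw [ht', Finset.sum_filter_ne_zero, hw1]
    have hxcm : t'.centerMass w z = x := by
      rw [Finset.centerMass_eq_of_sum_1 _ _ hsum', hxsum, ht']
      apply Finset.sum_filter_of_ne
      intro i hi hne hwi
      exact hne (by rw [hwi, zero_smul])
    rw [← hxcm]
    apply Finset.centerMass_mem_convexHull
    · intro i hi; exact hw0 i (Finset.mem_filter.1 hi).1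
    · rw [hsum']; norm_num
    · intro i hi
      rw [ht', Finset.mem_filter] at hi
      obtain ⟨π, v, hvV, hzi⟩ := hz i hi.1
      have hdzi : dotp y (z i) = dotp y x := hkey i hi.1 hi.2
      have hvV' : v ∈ (V : Set (Fin d → ℝ)) := hvV
      have hvS : v ∈ S := ⟨1, v, hvV', by funext j; simp [permAct]⟩
      have hvP : v ∈ P := subset_convexHull ℝ S hvS
      have hvF : Fund v := hVf v hvV'
      have h1 : dotp y (permAct π v) ≤ dotp y v := dotp_permAct_le hy hvF π
      have h2 : dotp y v ≤ dotp y x := hxmax v hvP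
      have h3 : dotp y (permAct π v) = dotp y x := by rw [← hzi]; exact hdzi
      have h4 : dotp y v = dotp y x := le_antisymm h2 (by rw [← h3]; exact h1)
      have h5 : dotp y (permAct π v) = dotp y v := by rw [h3, h4]
      obtain ⟨τ, hτstab, hτ⟩ := exists_stab hy hvF π h5
      refine ⟨τ, hτstab, v, hvV', ?_, ?_⟩
      · intro z' hz'; rw [h4]; exact hxmax z' hz'
      · rw [hzi, ← hτ]
  · apply convexHull_min
    · rintro x ⟨π, hπ, v, hvV, hvmax, rfl⟩
      have hxS : permAct π v ∈ S := ⟨π, v, hvV, rfl⟩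
      have hxP : permAct π v ∈ P := subset_convexHull ℝ S hxS
      have hdx : dotp y (permAct π v) = dotp y v := by
        rw [dotp_permAct]
        exact Finset.sum_congr rfl fun i _ => by rw [hπ i]
      exact ⟨hxP, fun z hz => by rw [hdx]; exact hvmax z hz⟩
    · intro x₁ hx₁ x₂ hx₂ a b ha hb hab
      have hconv : Convex ℝ P := by rw [hP, permPolytope]; exact convex_convexHull ℝ _
      refine ⟨hconv hx₁.1 hx₂.1 ha hb hab, ?_⟩
      intro z hz
      have h1 := hx₁.2 z hz
      have h2 := hx₂.2 z hz
      rw [dotp_combo]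
      have e : a * dotp y z + b * dotp y z = dotp y z := by rw [← add_mul, hab, one_mul]
      linarith [mul_le_mul_of_nonneg_left h1 ha, mul_le_mul_of_nonneg_left h2 hb]
end
end

section
/- Let V be a finite subset of the fundamental chamber Φ_d, let P = Perm(V), and let y ∈ Φ_d. Let c(y) = (c_1,…,c_k) be the composition of d recording the sizes of the maximal blocks of consecutive equal coordinates of y, let Proj_y : ℝ^d → ℝ^k be the linear map sending x to the vector of its block sums (the sum of the first c_1 coordinates, then of the next c_2 coordinates, etc.), let V_y = {v ∈ V : ⟨y, v⟩ = max_{u ∈ V} ⟨y, u⟩}, and let Fix(y) ⊆ {1,…,k} be the set of indices j such that every point x of the exposed face P^y has all its coordinates in the j-th block equal. Then the affine dimension of the face P^y = {x ∈ P : ⟨y, x⟩ = max_{z ∈ P} ⟨y, z⟩} equals the affine dimension of the convex hull of {Proj_y(v) : v ∈ V_y} plus Σ_{j ∈ [k]∖Fix(y)} (c_j − 1). -/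
open scoped Classical

noncomputable section

/-- Affine dimension of a subset of a real vector space. -/
noncomputable def adim {E : Type*} [AddCommGroup E] [Module ℝ E] (A : Set E) : ℕ :=
  Module.finrank ℝ (affineSpan ℝ A).direction

namespace DimFaceAux

open Finset

/-- `dotp y` as a linear map. -/
def dotL {d : ℕ} (y : Fin d → ℝ) : (Fin d → ℝ) →ₗ[ℝ] ℝ where
  toFun := dotp y
  map_add' a b := by
    simp only [dotp, Pi.add_apply, mul_add]
    rw [Finset.sum_add_distrib]
  map_smul' r a := by
    simp only [dotp, Pi.smul_apply, smul_eq_mul, RingHom.id_apply]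
    rw [Finset.mul_sum]
    exact Finset.sum_congr rfl fun i _ => by ring

/-- block-sum linear map. -/
def Lmap {d k : ℕ} (blk : Fin d → Fin k) : (Fin d → ℝ) →ₗ[ℝ] (Fin k → ℝ) where
  toFun x := fun j => ∑ i ∈ Finset.univ.filter (fun i => blk i = j), x i
  map_add' a b := by
    funext j
    simp only [Pi.add_apply]
    rw [Finset.sum_add_distrib]
  map_smul' r a := by
    funext j
    simp only [Pi.smul_apply, smul_eq_mul, RingHom.id_apply]
    rw [Finset.mul_sum]

/-- permutation action as a linear map. -/
def permL {d : ℕ} (σ : Equiv.Perm (Fin d)) : (Fin d → ℝ) →ₗ[ℝ] (Fin d → ℝ) where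
  toFun := permAct σ
  map_add' a b := rfl
  map_smul' r a := rfl

lemma downset_eq {d : ℕ} (S : Finset (Fin d)) (h : ∀ i ∈ S, ∀ i', i' ≤ i → i' ∈ S) :
    S = Finset.univ.filter (fun i : Fin d => (i : ℕ) < S.card) := by
  ext i
  simp only [mem_filter, mem_univ, true_and]
  constructor
  · intro hi
    have h1 : Finset.Iic i ⊆ S := fun i' hi' => h i hi i' (Finset.mem_Iic.mp hi')
    have h2 := Finset.card_le_card h1
    rw [Fin.card_Iic] at h2
    omega
  · intro hi
    by_contra hiS
    have h2 : S ⊆ Finset.Iio i := by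
      intro s hs
      rw [Finset.mem_Iio]
      rcases lt_or_ge s i with h' | h'
      · exact h'
      · exact absurd (h s hs i h') hiS
    have h3 := Finset.card_le_card h2
    rw [Fin.card_Iio] at h3
    omega

lemma sum_le_initial {d : ℕ} (v : Fin d → ℝ) (hv : Fund v) (S : Finset (Fin d)) :
    ∑ i ∈ S, v i ≤ ∑ i ∈ Finset.univ.filter (fun i : Fin d => (i : ℕ) < S.card), v i := by
  obtain ⟨n, hn⟩ : ∃ n, S.card = n := ⟨S.card, rfl⟩
  have hcard : n ≤ d := by
    have := Finset.card_le_card (Finset.subset_univ S)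
    simp only [Finset.card_univ, Fintype.card_fin] at this
    omega
  set e := S.orderEmbOfFin hn with he
  have hseg : Finset.univ.filter (fun i : Fin d => (i : ℕ) < S.card)
      = Finset.image (Fin.castLE hcard) Finset.univ := by
    ext i
    simp only [mem_filter, mem_univ, true_and, Finset.mem_image, hn]
    constructor
    · intro hi
      exact ⟨⟨(i : ℕ), hi⟩, by ext; simp⟩
    · rintro ⟨m, rfl⟩
      exact m.2
  have hSimg : S = Finset.image e Finset.univ := by
    ext i
    simp only [Finset.mem_image]
    constructor
    · intro hi
      have : i ∈ Set.range e := by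
        rw [he, Finset.range_orderEmbOfFin]; exact hi
      obtain ⟨m, hm⟩ := this
      exact ⟨m, Finset.mem_univ _, hm⟩
    · rintro ⟨m, -, rfl⟩
      exact Finset.orderEmbOfFin_mem _ _ _
  have h1 : ∑ i ∈ S, v i = ∑ m ∈ (Finset.univ : Finset (Fin n)), v (e m) := by
    conv_lhs => rw [hSimg]
    rw [Finset.sum_image (fun a _ b _ hab => e.injective hab)]
  have h2 : ∑ i ∈ Finset.univ.filter (fun i : Fin d => (i : ℕ) < S.card), v i
      = ∑ m ∈ (Finset.univ : Finset (Fin n)), v (Fin.castLE hcard m) := by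
    rw [hseg, Finset.sum_image (fun a _ b _ hab => Fin.castLE_injective _ hab)]
  rw [h1, h2]
  apply Finset.sum_le_sum
  intro m _
  apply hv
  have hsm : StrictMono e := e.strictMono
  have himg : Finset.image e (Finset.Iio m) ⊆ Finset.Iio (e m) := by
    intro i hi
    obtain ⟨a, ha, rfl⟩ := Finset.mem_image.mp hi
    exact Finset.mem_Iio.mpr (hsm (Finset.mem_Iio.mp ha))
  have hc1 : (Finset.image e (Finset.Iio m)).card = (m : ℕ) := by
    rw [Finset.card_image_of_injective _ e.injective, Fin.card_Iio]
  have hc2 := Finset.card_le_card himg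
  rw [hc1, Fin.card_Iio] at hc2
  exact Fin.mk_le_of_le_val hc2

lemma abel_identity (m : ℕ) (t D : ℕ → ℝ) :
    ∑ n ∈ Finset.range (m+1), t n * (D (n+1) - D n)
      = (∑ n ∈ Finset.range m, (t n - t (n+1)) * D (n+1)) + t m * D (m+1) - t 0 * D 0 := by
  have e1 : ∀ n, t n * (D (n+1) - D n) = t n * D (n+1) - t n * D n := fun n => by ring
  simp only [e1, Finset.sum_sub_distrib]
  rw [Finset.sum_range_succ (fun n => t n * D (n+1)) m,
    Finset.sum_range_succ' (fun n => t n * D n) m]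
  have e2 : ∀ n, (t n - t (n+1)) * D (n+1) = t n * D (n+1) - t (n+1) * D (n+1) := fun n => by ring
  simp only [e2, Finset.sum_sub_distrib]
  ring

lemma abel_main {K : ℕ} {t D : ℕ → ℝ} (ht : ∀ n, n+1 < K → t (n+1) < t n)
    (hD : ∀ n, 0 ≤ D n) (hD0 : D 0 = 0) (hDK : D K = 0) :
    0 ≤ ∑ n ∈ Finset.range K, t n * (D (n+1) - D n) ∧
      ((∑ n ∈ Finset.range K, t n * (D (n+1) - D n)) = 0 → ∀ n, n ≤ K → D n = 0) := by
  cases K with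
  | zero =>
    constructor
    · simp
    · intro _ n hn
      interval_cases n
      exact hD0
  | succ m =>
    rw [abel_identity, hD0, hDK]
    simp only [mul_zero, add_zero, sub_zero]
    have hterm : ∀ n ∈ Finset.range m, 0 ≤ (t n - t (n+1)) * D (n+1) := by
      intro n hn
      have h1 := ht n (by have := Finset.mem_range.mp hn; omega)
      exact mul_nonneg (by linarith) (hD _)
    refine ⟨Finset.sum_nonneg hterm, ?_⟩
    intro hzero n hn
    have hall := (Finset.sum_eq_zero_iff_of_nonneg hterm).mp hzero
    rcases Nat.eq_zero_or_pos n with rfl | hpos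
    · exact hD0
    · rcases Nat.lt_or_ge n (m+1) with hlt | hge
      · obtain ⟨n', rfl⟩ : ∃ n', n = n' + 1 := ⟨n - 1, by omega⟩
        have hmem : n' ∈ Finset.range m := Finset.mem_range.mpr (by omega)
        have := hall n' hmem
        have hc := ht n' (by omega)
        rcases mul_eq_zero.mp this with h | h
        · linarith
        · exact h
      · have : n = m + 1 := by omega
        rw [this]; exact hDK

lemma rearrange {d k : ℕ} (y : Fin d → ℝ) (hy : Fund y) (blk : Fin d → Fin k)
    (hmono : Monotone blk) (hblk : ∀ i i' : Fin d, y i = y i' ↔ blk i = blk i')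
    (hsurj : ∀ j, ∃ i, blk i = j)
    (v : Fin d → ℝ) (hv : Fund v) (π : Equiv.Perm (Fin d)) :
    dotp y (permAct π v) ≤ dotp y v ∧
      (dotp y (permAct π v) = dotp y v → ∀ j, Lmap blk (permAct π v) j = Lmap blk v j) := by
  set x := permAct π v with hx
  set D : ℕ → ℝ := fun n => ∑ i ∈ Finset.univ.filter (fun i : Fin d => ((blk i : ℕ)) < n), (v i - x i)
    with hD
  have hD0 : D 0 = 0 := by simp [hD]
  have hDK : D k = 0 := by
    have hall : Finset.univ.filter (fun i : Fin d => ((blk i : ℕ)) < k) = Finset.univ := by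
      apply Finset.filter_true_of_mem
      intro i _
      exact (blk i).2
    rw [hD]
    simp only [hall]
    rw [Finset.sum_sub_distrib]
    have hsx : ∑ i, x i = ∑ i, v i := by
      rw [hx]
      exact Equiv.sum_comp π⁻¹ v
    rw [hsx, sub_self]
  have hDnn : ∀ n, 0 ≤ D n := by
    intro n
    set Pn := Finset.univ.filter (fun i : Fin d => ((blk i : ℕ)) < n) with hPn
    have hdown : ∀ i ∈ Pn, ∀ i', i' ≤ i → i' ∈ Pn := by
      intro i hi i' hle
      simp only [hPn, mem_filter, mem_univ, true_and] at hi ⊢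
      have hb : blk i' ≤ blk i := hmono hle
      have : ((blk i' : ℕ)) ≤ ((blk i : ℕ)) := hb
      omega
    have hPeq := downset_eq Pn hdown
    have hxsum : ∑ i ∈ Pn, x i ≤ ∑ i ∈ Pn, v i := by
      have h1 : ∑ i ∈ Pn, x i = ∑ i ∈ Pn.map (π⁻¹ : Equiv.Perm (Fin d)).toEmbedding, v i := by
        rw [Finset.sum_map]
        rfl
      rw [h1]
      have h2 := sum_le_initial v hv (Pn.map (π⁻¹ : Equiv.Perm (Fin d)).toEmbedding)
      rw [Finset.card_map] at h2
      calc ∑ i ∈ Pn.map (π⁻¹ : Equiv.Perm (Fin d)).toEmbedding, v i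
          ≤ ∑ i ∈ Finset.univ.filter (fun i : Fin d => (i : ℕ) < Pn.card), v i := h2
        _ = ∑ i ∈ Pn, v i := by rw [← hPeq]
    rw [hD]
    simp only
    rw [Finset.sum_sub_distrib]
    rw [← hPn]
    linarith
  choose rep hrep using hsurj
  set t : Fin k → ℝ := fun j => y (rep j) with ht
  have hyt : ∀ i, y i = t (blk i) := by
    intro i
    exact (hblk i (rep (blk i))).mpr (hrep (blk i)).symm
  have htstrict : ∀ j j' : Fin k, j < j' → t j' < t j := by
    intro j j' hjj'
    have hle : rep j ≤ rep j' := by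
      by_contra hcon
      push_neg at hcon
      have h2 := hmono hcon.le
      rw [hrep, hrep] at h2
      exact absurd h2 (not_le.mpr hjj')
    have h1 : y (rep j') ≤ y (rep j) := hy _ _ hle
    have h2 : y (rep j') ≠ y (rep j) := by
      intro hcon
      have h3 := (hblk _ _).mp hcon
      rw [hrep, hrep] at h3
      exact absurd h3 (ne_of_gt hjj')
    exact lt_of_le_of_ne h1 h2
  have hinc : ∀ w : Fin d → ℝ, ∀ j : Fin k,
      (∑ i ∈ Finset.univ.filter (fun i : Fin d => ((blk i : ℕ)) < (j:ℕ)+1), w i)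
        - (∑ i ∈ Finset.univ.filter (fun i : Fin d => ((blk i : ℕ)) < (j:ℕ)), w i)
        = Lmap blk w j := by
    intro w j
    have hsplit : Finset.univ.filter (fun i : Fin d => ((blk i : ℕ)) < (j:ℕ)+1)
        = Finset.univ.filter (fun i : Fin d => ((blk i : ℕ)) < (j:ℕ))
          ∪ Finset.univ.filter (fun i : Fin d => blk i = j) := by
      ext i
      simp only [mem_filter, mem_union, mem_univ, true_and]
      constructor
      · intro h
        rcases Nat.lt_succ_iff_lt_or_eq.mp h with h | h
        · left; exact h
        · right; exact Fin.ext h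
      · rintro (h | h)
        · omega
        · rw [h]
          exact Nat.lt_succ_self _
    have hdisj : Disjoint (Finset.univ.filter (fun i : Fin d => ((blk i : ℕ)) < (j:ℕ)))
        (Finset.univ.filter (fun i : Fin d => blk i = j)) := by
      rw [Finset.disjoint_left]
      intro i h1 h2
      simp only [mem_filter, mem_univ, true_and] at h1 h2
      rw [h2] at h1
      exact lt_irrefl _ h1
    rw [hsplit, Finset.sum_union hdisj]
    have : Lmap blk w j = ∑ i ∈ Finset.univ.filter (fun i : Fin d => blk i = j), w i := rfl
    rw [this]
    ring
  have hDinc : ∀ j : Fin k, D ((j:ℕ)+1) - D (j:ℕ) = Lmap blk v j - Lmap blk x j := by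
    intro j
    rw [hD]
    simp only
    rw [Finset.sum_sub_distrib, Finset.sum_sub_distrib]
    have h1 := hinc v j
    have h2 := hinc x j
    linarith
  have hdot : ∀ w : Fin d → ℝ, dotp y w = ∑ j : Fin k, t j * Lmap blk w j := by
    intro w
    rw [dotp]
    rw [← Finset.sum_fiberwise Finset.univ blk (fun i => y i * w i)]
    apply Finset.sum_congr rfl
    intro j _
    have : Lmap blk w j = ∑ i ∈ Finset.univ.filter (fun i : Fin d => blk i = j), w i := rfl
    rw [this, Finset.mul_sum]
    apply Finset.sum_congr rfl
    intro i hi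
    have hij : blk i = j := (Finset.mem_filter.mp hi).2
    rw [hyt i, hij]
  set tN : ℕ → ℝ := fun n => if h : n < k then t ⟨n, h⟩ else 0 with htN
  have hFsum : dotp y v - dotp y x = ∑ n ∈ Finset.range k, tN n * (D (n+1) - D n) := by
    rw [hdot v, hdot x, ← Finset.sum_sub_distrib]
    rw [← Fin.sum_univ_eq_sum_range (fun n => tN n * (D (n+1) - D n)) k]
    apply Finset.sum_congr rfl
    intro j _
    have h1 : tN (j : ℕ) = t j := by
      rw [htN]
      simp only
      rw [dif_pos j.2]
    rw [h1, hDinc j]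
    ring
  have htNs : ∀ n, n+1 < k → tN (n+1) < tN n := by
    intro n hn
    rw [htN]
    simp only
    rw [dif_pos hn, dif_pos (by omega : n < k)]
    exact htstrict ⟨n, by omega⟩ ⟨n+1, hn⟩ (by simp)
  have habel := abel_main htNs hDnn hD0 hDK
  constructor
  · have h1 := habel.1
    rw [← hFsum] at h1
    linarith
  · intro heq j
    have hz : ∑ n ∈ Finset.range k, tN n * (D (n+1) - D n) = 0 := by
      rw [← hFsum, heq, sub_self]
    have hDall := habel.2 hz
    have h1 : D ((j:ℕ)+1) = 0 := hDall _ (by have := j.2; omega)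
    have h2 : D (j:ℕ) = 0 := hDall _ (by have := j.2; omega)
    have h3 := hDinc j
    rw [h1, h2] at h3
    have : Lmap blk v j - Lmap blk x j = 0 := by linarith
    linarith

lemma mem_convexHull_face {d : ℕ} (y : Fin d → ℝ) (s : Set (Fin d → ℝ)) (M : ℝ)
    (hle : ∀ z ∈ s, dotp y z ≤ M) {x : Fin d → ℝ} (hx : x ∈ convexHull ℝ s)
    (hxM : dotp y x = M) :
    x ∈ convexHull ℝ {z | z ∈ s ∧ dotp y z = M} := by
  rw [_root_.convexHull_eq] at hx
  obtain ⟨ι, tt, w, z, hw0, hw1, hzs, hcm⟩ := hx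
  have hcm' : x = ∑ i ∈ tt, w i • z i := by
    rw [← hcm, Finset.centerMass, hw1]
    simp
  have hdotsum : dotp y x = ∑ i ∈ tt, w i * dotp y (z i) := by
    rw [hcm']
    have : dotp y (∑ i ∈ tt, w i • z i) = dotL y (∑ i ∈ tt, w i • z i) := rfl
    rw [this, map_sum]
    apply Finset.sum_congr rfl
    intro i _
    rw [map_smul]
    rfl
  have hdx : ∑ i ∈ tt, w i * dotp y (z i) = M := by rw [← hdotsum, hxM]
  have hall : ∀ i ∈ tt, w i ≠ 0 → dotp y (z i) = M := by
    intro i0 hi0 hwi0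
    by_contra hne
    have hlt : dotp y (z i0) < M := lt_of_le_of_ne (hle _ (hzs _ hi0)) hne
    have hstrict : ∑ i ∈ tt, w i * dotp y (z i) < ∑ i ∈ tt, w i * M := by
      apply Finset.sum_lt_sum
      · intro i hi
        exact mul_le_mul_of_nonneg_left (hle _ (hzs _ hi)) (hw0 _ hi)
      · exact ⟨i0, hi0, mul_lt_mul_of_pos_left hlt
          (lt_of_le_of_ne (hw0 _ hi0) (Ne.symm hwi0))⟩
    rw [hdx, ← Finset.sum_mul, hw1, one_mul] at hstrict
    exact lt_irrefl M hstrict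
  set tt' := tt.filter (fun i => w i ≠ 0) with htt'
  have hsum' : ∑ i ∈ tt', w i = 1 := by
    rw [htt', Finset.sum_filter_ne_zero, hw1]
  have hxeq : x = ∑ i ∈ tt', w i • z i := by
    rw [hcm', htt']
    symm
    apply Finset.sum_filter_of_ne
    intro i _ hne hwz
    apply hne
    rw [hwz, zero_smul]
  have hmem := Finset.centerMass_mem_convexHull tt'
    (w := w) (z := z) (s := {p : Fin d → ℝ | p ∈ s ∧ dotp y p = M})
    (fun i hi => hw0 i (Finset.mem_of_mem_filter i hi))
    (by rw [hsum']; norm_num)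
    (fun i hi => ⟨hzs i (Finset.mem_of_mem_filter i hi),
      hall i (Finset.mem_of_mem_filter i hi) (Finset.mem_filter.mp hi).2⟩)
  have hcm2 : tt'.centerMass w z = x := by
    rw [Finset.centerMass, hsum', hxeq]
    simp
  rwa [hcm2] at hmem

def suppSub {ι : Type*} [Fintype ι] (s : Finset ι) : Submodule ℝ (ι → ℝ) where
  carrier := {f | ∀ i, i ∉ s → f i = 0}
  add_mem' := by
    intro a b ha hb i hi
    simp only [Pi.add_apply, ha i hi, hb i hi, add_zero]
  zero_mem' := by
    intro i _
    rfl
  smul_mem' := by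
    intro r f hf i hi
    simp only [Pi.smul_apply, hf i hi, smul_eq_mul, mul_zero]

lemma finrank_suppSub {ι : Type*} [Fintype ι] (s : Finset ι) :
    Module.finrank ℝ (suppSub s) = s.card := by
  let e : suppSub s ≃ₗ[ℝ] (s → ℝ) :=
    { toFun := fun f i => f.1 i
      map_add' := fun a b => rfl
      map_smul' := fun r a => rfl
      invFun := fun g => ⟨fun i => if h : i ∈ s then g ⟨i, h⟩ else 0, fun i hi => dif_neg hi⟩
      left_inv := by
        intro f
        apply Subtype.ext
        funext i
        by_cases h : i ∈ s
        · simp only [dif_pos h]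
        · simp only [dif_neg h]
          exact (f.2 i h).symm
      right_inv := by
        intro g
        funext i
        simp only [dif_pos i.2] }
  rw [e.finrank_eq]
  rw [Module.finrank_fintype_fun_eq_card]
  exact Fintype.card_coe s

end DimFaceAux

/-- Dimension formula for the faces of a symmetric polytope.  The data
`(k, c, blk)` encodes the composition of `d` recording the maximal blocks of
consecutive equal coordinates of the fundamental vector `y`. -/
theorem dim_face_permPolytope
    {d k : ℕ} (V : Finset (Fin d → ℝ)) (hVne : V.Nonempty) (hVf : ∀ v ∈ V, Fund v)
    (y : Fin d → ℝ) (hy : Fund y)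
    (c : Fin k → ℕ) (hc : ∀ j, 1 ≤ c j) (hcsum : ∑ j, c j = d)
    (blk : Fin d → Fin k) (hmono : Monotone blk)
    (hcard : ∀ j, (Finset.univ.filter fun i => blk i = j).card = c j)
    (hblk : ∀ i i' : Fin d, y i = y i' ↔ blk i = blk i') :
    adim (faceAt (permPolytope (V : Set (Fin d → ℝ))) y) =
      adim (convexHull ℝ
        ((fun x : Fin d → ℝ => fun j : Fin k =>
            ∑ i ∈ Finset.univ.filter (fun i => blk i = j), x i) ''
          {v : Fin d → ℝ | v ∈ V ∧ ∀ u ∈ V, dotp y u ≤ dotp y v})) +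
      ∑ j : Fin k,
        if (∀ x ∈ faceAt (permPolytope (V : Set (Fin d → ℝ))) y,
            ∀ i i' : Fin d, blk i = j → blk i' = j → x i = x i')
        then 0 else c j - 1 := by
  classical
  open DimFaceAux Finset in
  set F : Set (Fin d → ℝ) := faceAt (permPolytope (V : Set (Fin d → ℝ))) y with hFdef
  set Vyset : Set (Fin d → ℝ) := {v : Fin d → ℝ | v ∈ V ∧ ∀ u ∈ V, dotp y u ≤ dotp y v}
    with hVydef
  set L : (Fin d → ℝ) →ₗ[ℝ] (Fin k → ℝ) := DimFaceAux.Lmap blk with hLdef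
  set S0 : Set (Fin d → ℝ) :=
    {x | ∃ π : Equiv.Perm (Fin d), ∃ v ∈ (V : Set (Fin d → ℝ)), x = permAct π v} with hS0def
  have hPeq : permPolytope (V : Set (Fin d → ℝ)) = convexHull ℝ S0 := rfl
  have hsurj : ∀ j : Fin k, ∃ i, blk i = j := by
    intro j
    have h1 : 0 < (Finset.univ.filter fun i => blk i = j).card := by
      rw [hcard]; exact hc j
    obtain ⟨i, hi⟩ := Finset.card_pos.mp h1
    exact ⟨i, (Finset.mem_filter.mp hi).2⟩
  obtain ⟨v₀, hv₀V, hv₀max⟩ := Finset.exists_max_image V (dotp y) hVne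
  set M : ℝ := dotp y v₀ with hMdef
  have hRE : ∀ v ∈ V, ∀ π : Equiv.Perm (Fin d),
      dotp y (permAct π v) ≤ dotp y v ∧
        (dotp y (permAct π v) = dotp y v → ∀ j, L (permAct π v) j = L v j) :=
    fun v hv π => DimFaceAux.rearrange y hy blk hmono hblk hsurj v (hVf v hv) π
  have hS0le : ∀ z ∈ S0, dotp y z ≤ M := by
    rintro z ⟨π, v, hvV, rfl⟩
    exact ((hRE v hvV π).1).trans (hv₀max v hvV)
  have hPsub : convexHull ℝ S0 ⊆ {w : Fin d → ℝ | dotp y w ≤ M} := by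
    apply convexHull_min hS0le
    exact convex_halfSpace_le ⟨(DimFaceAux.dotL y).map_add, (DimFaceAux.dotL y).map_smul⟩ M
  have hVP : ∀ v ∈ V, v ∈ convexHull ℝ S0 := by
    intro v hv
    apply subset_convexHull
    exact ⟨1, v, hv, by funext i; simp [permAct]⟩
  have hmemF : ∀ x, x ∈ F ↔ x ∈ convexHull ℝ S0 ∧ dotp y x = M := by
    intro x
    constructor
    · rintro ⟨hxP, hxmax⟩
      exact ⟨hxP, le_antisymm (hPsub hxP) (hxmax v₀ (hVP v₀ hv₀V))⟩
    · rintro ⟨hxP, hxM⟩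
      exact ⟨hxP, fun z hz => by rw [hxM]; exact hPsub hz⟩
  have hVyF : ∀ v ∈ Vyset, v ∈ F := by
    rintro v ⟨hvV, hvmax⟩
    exact (hmemF v).mpr ⟨hVP v hvV, le_antisymm (hv₀max v hvV) (hvmax v₀ hv₀V)⟩
  have hv₀Vy : v₀ ∈ Vyset := ⟨hv₀V, hv₀max⟩
  have hFG : ∀ x ∈ F, x ∈ convexHull ℝ {z | z ∈ S0 ∧ dotp y z = M} := by
    intro x hx
    exact DimFaceAux.mem_convexHull_face y S0 M hS0le ((hmemF x).mp hx).1 ((hmemF x).mp hx).2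
  have hLG : ∀ z ∈ {z | z ∈ S0 ∧ dotp y z = M}, L z ∈ ⇑L '' Vyset := by
    rintro z ⟨⟨π, v, hvV, rfl⟩, hzM⟩
    have h1 : dotp y (permAct π v) ≤ dotp y v := (hRE v hvV π).1
    have h2 : dotp y v ≤ M := hv₀max v hvV
    have h3 : dotp y (permAct π v) = dotp y v := le_antisymm h1 (hzM ▸ h2)
    have h4 := (hRE v hvV π).2 h3
    have hvM : dotp y v = M := h3.symm.trans hzM
    refine ⟨v, ⟨hvV, fun u hu => (hv₀max u hu).trans (le_of_eq hvM.symm)⟩, ?_⟩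
    exact (funext h4).symm
  have hLF : ∀ x ∈ F, L x ∈ convexHull ℝ (⇑L '' Vyset) := by
    intro x hx
    have h2 : L x ∈ ⇑L '' (convexHull ℝ {z | z ∈ S0 ∧ dotp y z = M}) := ⟨x, hFG x hx, rfl⟩
    rw [L.image_convexHull] at h2
    refine convexHull_mono ?_ h2
    rintro u ⟨zz, hzz, rfl⟩
    exact hLG zz hzz
  set W1 : Submodule ℝ (Fin k → ℝ) := vectorSpan ℝ (⇑L '' Vyset) with hW1def
  have hLFdir : ∀ x ∈ F, ∀ x' ∈ F, L x - L x' ∈ W1 := by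
    intro x hx x' hx'
    have h1 : L x ∈ affineSpan ℝ (⇑L '' Vyset) :=
      (convexHull_subset_affineSpan _) (hLF x hx)
    have h2 : L x' ∈ affineSpan ℝ (⇑L '' Vyset) :=
      (convexHull_subset_affineSpan _) (hLF x' hx')
    have h3 := AffineSubspace.vsub_mem_direction h1 h2
    rwa [direction_affineSpan] at h3
  set Fixp : Fin k → Prop :=
    fun j => ∀ x ∈ F, ∀ i i' : Fin d, blk i = j → blk i' = j → x i = x i' with hFixpdef
  set Wt : Submodule ℝ (Fin d → ℝ) :=
    { carrier := {w | L w ∈ W1 ∧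
        ∀ j, Fixp j → ∀ i i' : Fin d, blk i = j → blk i' = j → w i = w i'}
      add_mem' := by
        rintro a b ⟨ha1, ha2⟩ ⟨hb1, hb2⟩
        refine ⟨by rw [map_add]; exact W1.add_mem ha1 hb1, ?_⟩
        intro j hj i i' h h'
        simp only [Pi.add_apply, ha2 j hj i i' h h', hb2 j hj i i' h h']
      zero_mem' := ⟨by rw [map_zero]; exact W1.zero_mem, fun j hj i i' h h' => rfl⟩
      smul_mem' := by
        rintro r a ⟨ha1, ha2⟩
        refine ⟨by rw [map_smul]; exact W1.smul_mem r ha1, ?_⟩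
        intro j hj i i' h h'
        simp only [Pi.smul_apply, ha2 j hj i i' h h'] } with hWtdef
  have hWtmem : ∀ w : Fin d → ℝ, w ∈ Wt ↔ (L w ∈ W1 ∧
      ∀ j, Fixp j → ∀ i i' : Fin d, blk i = j → blk i' = j → w i = w i') := fun w => Iff.rfl
  have hsub1 : vectorSpan ℝ F ≤ Wt := by
    rw [vectorSpan_def]
    apply Submodule.span_le.mpr
    rintro w ⟨x, hx, x', hx', rfl⟩
    refine (hWtmem _).mpr ⟨?_, ?_⟩
    · have : L (x -ᵥ x') = L x - L x' := by
        show L (x - x') = L x - L x'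
        rw [map_sub]
      rw [this]
      exact hLFdir x hx x' hx'
    · intro j hj i i' h h'
      show x i - x' i = x i' - x' i'
      rw [hj x hx i i' h h', hj x' hx' i i' h h']
  have hS0perm : ∀ (σ : Equiv.Perm (Fin d)), ∀ z ∈ S0, permAct σ z ∈ S0 := by
    rintro σ z ⟨π, v, hv, rfl⟩
    refine ⟨σ * π, v, hv, ?_⟩
    funext i
    simp [permAct, mul_inv_rev, Equiv.Perm.mul_apply]
  have hPperm : ∀ (σ : Equiv.Perm (Fin d)), ∀ x ∈ convexHull ℝ S0,
      permAct σ x ∈ convexHull ℝ S0 := by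
    intro σ x hx
    have h1 : permAct σ x ∈ ⇑(DimFaceAux.permL σ) '' (convexHull ℝ S0) := ⟨x, hx, rfl⟩
    rw [(DimFaceAux.permL σ).image_convexHull] at h1
    refine convexHull_mono ?_ h1
    rintro u ⟨zz, hzz, rfl⟩
    exact hS0perm σ zz hzz
  have hdotperm : ∀ (σ : Equiv.Perm (Fin d)), (∀ i, y (σ i) = y i) →
      ∀ x : Fin d → ℝ, dotp y (permAct σ x) = dotp y x := by
    intro σ hσ x
    have h1 : dotp y (permAct σ x) = ∑ i, y i * x (σ⁻¹ i) := rfl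
    rw [h1, ← Equiv.sum_comp σ (fun i => y i * x (σ⁻¹ i))]
    apply Finset.sum_congr rfl
    intro i _
    rw [hσ i, ← Equiv.Perm.mul_apply, inv_mul_cancel, Equiv.Perm.one_apply]
  have hFperm : ∀ (σ : Equiv.Perm (Fin d)), (∀ i, y (σ i) = y i) →
      ∀ x ∈ F, permAct σ x ∈ F := by
    intro σ hσ x hx
    obtain ⟨hxP, hxM⟩ := (hmemF x).mp hx
    exact (hmemF _).mpr ⟨hPperm σ x hxP, by rw [hdotperm σ hσ x, hxM]⟩
  have hswap : ∀ x ∈ F, ∀ a b : Fin d, blk a = blk b → x a ≠ x b →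
      (Pi.single a (1:ℝ) - Pi.single b 1) ∈ vectorSpan ℝ F := by
    intro x hx a b hab hxab
    have hne : a ≠ b := fun h => hxab (by rw [h])
    have hyab : y a = y b := (hblk a b).mpr hab
    set σ : Equiv.Perm (Fin d) := Equiv.swap a b with hσdef
    have hσ : ∀ i, y (σ i) = y i := by
      intro i
      rw [hσdef]
      rcases eq_or_ne i a with rfl | hia
      · rw [Equiv.swap_apply_left]; exact hyab.symm
      · rcases eq_or_ne i b with rfl | hib
        · rw [Equiv.swap_apply_right]; exact hyab
        · rw [Equiv.swap_apply_of_ne_of_ne hia hib]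
    have hx' : permAct σ x ∈ F := hFperm σ hσ x hx
    have hdiff : x - permAct σ x = (x a - x b) • (Pi.single a (1:ℝ) - Pi.single b 1) := by
      funext i
      have hx'i : permAct σ x i = x (σ i) := by
        show x (σ⁻¹ i) = x (σ i)
        rw [hσdef, Equiv.swap_inv]
      simp only [Pi.sub_apply, Pi.smul_apply, smul_eq_mul, hx'i, Pi.single_apply]
      rcases eq_or_ne i a with rfl | hia
      · simp only [hσdef, Equiv.swap_apply_left]
        simp [hne, hne.symm]
      · rcases eq_or_ne i b with rfl | hib
        · simp only [hσdef, Equiv.swap_apply_right]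
          simp [hne, hne.symm]
          try ring
        · simp only [hσdef, Equiv.swap_apply_of_ne_of_ne hia hib]
          simp [hia, hib]
    have hmem : x - permAct σ x ∈ vectorSpan ℝ F := vsub_mem_vectorSpan ℝ hx hx'
    have h9 : (x a - x b)⁻¹ • (x - permAct σ x) ∈ vectorSpan ℝ F :=
      Submodule.smul_mem _ _ hmem
    rwa [hdiff, smul_smul, inv_mul_cancel₀ (sub_ne_zero.mpr hxab), one_smul] at h9
  have hpairs : ∀ j, ¬ Fixp j → ∀ p q : Fin d, blk p = j → blk q = j →
      (Pi.single p (1:ℝ) - Pi.single q 1) ∈ vectorSpan ℝ F := by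
    intro j hnj
    have hnj' : ¬ (∀ x ∈ F, ∀ i i' : Fin d, blk i = j → blk i' = j → x i = x i') := hnj
    push_neg at hnj'
    obtain ⟨x, hxF, a, b, ha, hb, hxab⟩ := hnj'
    have hA : ∀ p : Fin d, blk p = j → Pi.single p (1:ℝ) - Pi.single a 1 ∈ vectorSpan ℝ F := by
      intro p hp
      by_cases hpa : x p = x a
      · have hpb : x p ≠ x b := by rw [hpa]; exact hxab
        have h1 := hswap x hxF p b (by rw [hp, hb]) hpb
        have h2 := hswap x hxF a b (by rw [ha, hb]) hxab
        have h3 := Submodule.sub_mem _ h1 h2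
        rwa [sub_sub_sub_cancel_right] at h3
      · exact hswap x hxF p a (by rw [hp, ha]) hpa
    intro p q hp hq
    have h3 := Submodule.sub_mem _ (hA p hp) (hA q hq)
    rwa [sub_sub_sub_cancel_right] at h3
  have hW1map : W1 ≤ Submodule.map L (vectorSpan ℝ F) := by
    rw [hW1def, vectorSpan_def]
    apply Submodule.span_le.mpr
    rintro u ⟨p1, ⟨va, hva, rfl⟩, p2, ⟨vb, hvb, rfl⟩, rfl⟩
    refine ⟨va - vb, vsub_mem_vectorSpan ℝ (hVyF va hva) (hVyF vb hvb), ?_⟩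
    show L (va - vb) = L va -ᵥ L vb
    rw [map_sub]
    rfl
  have hvanish : ∀ (z : Fin d → ℝ) (i : Fin d), L z (blk i) = 0 →
      (∀ i', blk i' = blk i → z i' = z i) → z i = 0 := by
    intro z i hLz hconst
    have h1 : L z (blk i) = ∑ i' ∈ Finset.univ.filter (fun i' => blk i' = blk i), z i' := rfl
    have h2 : ∑ i' ∈ Finset.univ.filter (fun i' => blk i' = blk i), z i'
        = (c (blk i) : ℝ) * z i := by
      rw [Finset.sum_congr rfl (fun i' hi' => hconst i' (Finset.mem_filter.mp hi').2)]
      rw [Finset.sum_const, hcard]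
      simp [nsmul_eq_mul]
    have hc0 : (0:ℝ) < (c (blk i) : ℝ) := by exact_mod_cast hc (blk i)
    have h3 : (c (blk i) : ℝ) * z i = 0 := by rw [← h2, ← h1, hLz]
    rcases mul_eq_zero.mp h3 with h | h
    · exact absurd h (ne_of_gt hc0)
    · exact h
  have hsub2 : Wt ≤ vectorSpan ℝ F := by
    intro w hw
    obtain ⟨hw1, hw2⟩ := (hWtmem w).mp hw
    obtain ⟨w', hw'span, hw'L⟩ := hW1map hw1
    obtain ⟨hw'1, hw'2⟩ := (hWtmem w').mp (hsub1 hw'span)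
    set z : Fin d → ℝ := w - w' with hzdef
    have hzL : ∀ j, L z j = 0 := by
      intro j
      rw [hzdef, map_sub, hw'L]
      simp
    have hz0 : ∀ i : Fin d, Fixp (blk i) → z i = 0 := by
      intro i hFix
      refine hvanish z i (hzL _) ?_
      intro i' hi'
      show w i' - w' i' = w i - w' i
      rw [hw2 (blk i) hFix i' i hi' rfl, hw'2 (blk i) hFix i' i hi' rfl]
    have hzdecomp : z = ∑ j : Fin k, (fun i => if blk i = j then z i else 0) := by
      funext i
      rw [Finset.sum_apply]
      rw [Finset.sum_ite_eq Finset.univ (blk i) (fun _ => z i)]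
      simp
    have hzmem : z ∈ vectorSpan ℝ F := by
      rw [hzdecomp]
      apply Submodule.sum_mem
      intro j _
      by_cases hj : Fixp j
      · have hzero : (fun i => if blk i = j then z i else 0) = (0 : Fin d → ℝ) := by
          funext i
          by_cases h : blk i = j
          · rw [if_pos h]
            exact hz0 i (h ▸ hj)
          · rw [if_neg h]
            rfl
        rw [hzero]
        exact Submodule.zero_mem _
      · obtain ⟨q0, hq0⟩ := hsurj j
        have hsum0 : ∑ p ∈ Finset.univ.filter (fun p => blk p = j), z p = 0 := hzL j
        have hident : (fun i => if blk i = j then z i else 0)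
            = ∑ p ∈ Finset.univ.filter (fun p => blk p = j),
                z p • (Pi.single p (1:ℝ) - Pi.single q0 1) := by
          funext i
          rw [Finset.sum_apply]
          simp only [Pi.smul_apply, Pi.sub_apply, smul_eq_mul, mul_sub]
          rw [Finset.sum_sub_distrib]
          have hpart1 : ∑ p ∈ Finset.univ.filter (fun p => blk p = j), z p * (Pi.single p (1:ℝ) : Fin d → ℝ) i
              = if blk i = j then z i else 0 := by
            have hconv : ∀ p, z p * (Pi.single p (1:ℝ) : Fin d → ℝ) i = if p = i then z p else 0 := by
              intro p
              rw [Pi.single_apply]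
              by_cases h : i = p
              · rw [if_pos h, if_pos h.symm, mul_one]
              · rw [if_neg h, if_neg (Ne.symm h), mul_zero]
            rw [Finset.sum_congr rfl (fun p _ => hconv p)]
            rw [Finset.sum_ite_eq' (Finset.univ.filter (fun p => blk p = j)) i (fun p => z p)]
            by_cases h : blk i = j
            · rw [if_pos (by simp [h]), if_pos h]
            · rw [if_neg (by simp [h]), if_neg h]
          have hpart2 : ∑ p ∈ Finset.univ.filter (fun p => blk p = j), z p * (Pi.single q0 (1:ℝ) : Fin d → ℝ) i
              = 0 := by
            rw [← Finset.sum_mul, hsum0, zero_mul]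
          rw [hpart1, hpart2, sub_zero]
        rw [hident]
        apply Submodule.sum_mem
        intro p hp
        exact Submodule.smul_mem _ _ (hpairs j hj p q0 (Finset.mem_filter.mp hp).2 hq0)
    have hweq : w = w' + z := by rw [hzdef, add_sub_cancel]
    rw [hweq]
    exact Submodule.add_mem _ hw'span hzmem
  have hvspan : vectorSpan ℝ F = Wt := le_antisymm hsub1 hsub2
  set nf : Finset (Fin k) := Finset.univ.filter (fun j => ¬ Fixp j) with hnfdef
  have hrangef : LinearMap.range (L.domRestrict Wt) = W1 := by
    rw [LinearMap.range_domRestrict]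
    apply le_antisymm
    · rintro u ⟨w, hw, rfl⟩
      exact ((hWtmem w).mp hw).1
    · rw [hvspan] at hW1map
      exact hW1map
  have hkerWteq : Submodule.comap Wt.subtype (LinearMap.ker L)
      = Submodule.comap Wt.subtype (LinearMap.ker L ⊓ Wt) := by
    ext w
    simp only [Submodule.mem_comap, LinearMap.mem_ker, Submodule.mem_inf]
    exact ⟨fun h => ⟨h, w.2⟩, fun h => h.1⟩
  have hkerf : Module.finrank ℝ (LinearMap.ker (L.domRestrict Wt))
      = Module.finrank ℝ (LinearMap.ker L ⊓ Wt : Submodule ℝ (Fin d → ℝ)) := by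
    rw [LinearMap.ker_domRestrict, hkerWteq]
    exact (Submodule.comapSubtypeEquivOfLe inf_le_right).finrank_eq
  have hrank1 : Module.finrank ℝ Wt
      = Module.finrank ℝ W1
        + Module.finrank ℝ (LinearMap.ker L ⊓ Wt : Submodule ℝ (Fin d → ℝ)) := by
    have h := LinearMap.finrank_range_add_finrank_ker (L.domRestrict Wt)
    rw [hrangef, hkerf] at h
    omega
  set sA : Finset (Fin d) := Finset.univ.filter (fun i => ¬ Fixp (blk i)) with hsAdef
  have hfinA : Module.finrank ℝ (DimFaceAux.suppSub sA) = ∑ j ∈ nf, c j := by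
    rw [DimFaceAux.finrank_suppSub]
    rw [Finset.card_eq_sum_card_fiberwise (f := blk) (t := nf)
      (fun i hi => by
        simp only [hsAdef, Finset.mem_coe, Finset.mem_filter, Finset.mem_univ, true_and] at hi
        simp only [hnfdef, Finset.mem_coe, Finset.mem_filter, Finset.mem_univ, true_and]
        exact hi)]
    apply Finset.sum_congr rfl
    intro j hj
    rw [← hcard j]
    congr 1
    ext i
    simp only [hsAdef, Finset.mem_filter, Finset.mem_univ, true_and]
    constructor
    · rintro ⟨-, h⟩
      exact h
    · intro h
      refine ⟨?_, h⟩
      rw [h]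
      simp only [hnfdef, Finset.mem_filter, Finset.mem_univ, true_and] at hj
      exact hj
  choose rep hrep using hsurj
  have hrangeg : LinearMap.range (L.domRestrict (DimFaceAux.suppSub sA))
      = DimFaceAux.suppSub nf := by
    rw [LinearMap.range_domRestrict]
    apply le_antisymm
    · rintro u ⟨zz, hzz, rfl⟩
      intro j hj
      have hFix : Fixp j := by
        by_contra hcon
        exact hj (by simp only [hnfdef, Finset.mem_filter, Finset.mem_univ, true_and]; exact hcon)
      show ∑ i ∈ Finset.univ.filter (fun i => blk i = j), zz i = 0
      apply Finset.sum_eq_zero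
      intro i hi
      have hbi : blk i = j := (Finset.mem_filter.mp hi).2
      refine hzz i ?_
      simp only [hsAdef, Finset.mem_filter, Finset.mem_univ, true_and, not_not, hbi]
      exact hFix
    · intro u hu
      set zz : Fin d → ℝ := fun i => if rep (blk i) = i then u (blk i) else 0 with hzzdef
      have hzzA : zz ∈ DimFaceAux.suppSub sA := by
        intro i hi
        have hFix : Fixp (blk i) := by
          by_contra hcon
          exact hi (by simp only [hsAdef, Finset.mem_filter, Finset.mem_univ, true_and]; exact hcon)
        have hu0 : u (blk i) = 0 := by
          refine hu (blk i) ?_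
          simp only [hnfdef, Finset.mem_filter, Finset.mem_univ, true_and, not_not]
          exact hFix
        rw [hzzdef]
        simp only [hu0, ite_self]
      refine ⟨zz, hzzA, ?_⟩
      funext j
      show ∑ i ∈ Finset.univ.filter (fun i => blk i = j), zz i = u j
      have hconv : ∀ i ∈ Finset.univ.filter (fun i => blk i = j),
          zz i = if rep j = i then u j else 0 := by
        intro i hi
        have hbi : blk i = j := (Finset.mem_filter.mp hi).2
        rw [hzzdef]
        simp only [hbi]
      rw [Finset.sum_congr rfl hconv]
      rw [Finset.sum_ite_eq (Finset.univ.filter (fun i => blk i = j)) (rep j) (fun _ => u j)]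
      rw [if_pos (by simp only [Finset.mem_filter, Finset.mem_univ, true_and]; exact hrep j)]
  have hkerAeq : Submodule.comap (DimFaceAux.suppSub sA).subtype (LinearMap.ker L)
      = Submodule.comap (DimFaceAux.suppSub sA).subtype
          (LinearMap.ker L ⊓ DimFaceAux.suppSub sA) := by
    ext w
    simp only [Submodule.mem_comap, LinearMap.mem_ker, Submodule.mem_inf]
    exact ⟨fun h => ⟨h, w.2⟩, fun h => h.1⟩
  have hkerg : Module.finrank ℝ (LinearMap.ker (L.domRestrict (DimFaceAux.suppSub sA)))
      = Module.finrank ℝ (LinearMap.ker L ⊓ DimFaceAux.suppSub sA : Submodule ℝ (Fin d → ℝ)) := by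
    rw [LinearMap.ker_domRestrict, hkerAeq]
    exact (Submodule.comapSubtypeEquivOfLe inf_le_right).finrank_eq
  have hrank2 : Module.finrank ℝ (DimFaceAux.suppSub sA)
      = Module.finrank ℝ (DimFaceAux.suppSub nf)
        + Module.finrank ℝ (LinearMap.ker L ⊓ DimFaceAux.suppSub sA : Submodule ℝ (Fin d → ℝ)) := by
    have h := LinearMap.finrank_range_add_finrank_ker (L.domRestrict (DimFaceAux.suppSub sA))
    rw [hrangeg, hkerg] at h
    omega
  have hKeq : (LinearMap.ker L ⊓ Wt : Submodule ℝ (Fin d → ℝ))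
      = (LinearMap.ker L ⊓ DimFaceAux.suppSub sA : Submodule ℝ (Fin d → ℝ)) := by
    ext z
    simp only [Submodule.mem_inf, LinearMap.mem_ker]
    constructor
    · rintro ⟨hz0, hzWt⟩
      obtain ⟨-, hzc⟩ := (hWtmem z).mp hzWt
      refine ⟨hz0, ?_⟩
      intro i hi
      have hFix : Fixp (blk i) := by
        by_contra hcon
        exact hi (by simp only [hsAdef, Finset.mem_filter, Finset.mem_univ, true_and]; exact hcon)
      refine hvanish z i ?_ ?_
      · rw [hz0]
        rfl
      · intro i' hi'
        exact hzc (blk i) hFix i' i hi' rfl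
    · rintro ⟨hz0, hzA⟩
      refine ⟨hz0, (hWtmem z).mpr ⟨by rw [hz0]; exact W1.zero_mem, ?_⟩⟩
      intro j hj i i' hbi hbi'
      have h1 : z i = 0 := by
        refine hzA i ?_
        simp only [hsAdef, Finset.mem_filter, Finset.mem_univ, true_and, not_not, hbi]
        exact hj
      have h2 : z i' = 0 := by
        refine hzA i' ?_
        simp only [hsAdef, Finset.mem_filter, Finset.mem_univ, true_and, not_not, hbi']
        exact hj
      rw [h1, h2]
  have hfinB : Module.finrank ℝ (DimFaceAux.suppSub nf) = nf.card :=
    DimFaceAux.finrank_suppSub nf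
  have hsumc : (∑ j ∈ nf, (c j - 1)) + nf.card = ∑ j ∈ nf, c j := by
    rw [Finset.card_eq_sum_ones, ← Finset.sum_add_distrib]
    apply Finset.sum_congr rfl
    intro j _
    have := hc j
    omega
  have hkerval : Module.finrank ℝ (LinearMap.ker L ⊓ Wt : Submodule ℝ (Fin d → ℝ))
      = ∑ j ∈ nf, (c j - 1) := by
    rw [hKeq]
    omega
  have hite : (∑ j : Fin k, if Fixp j then 0 else c j - 1) = ∑ j ∈ nf, (c j - 1) := by
    rw [hnfdef, Finset.sum_filter]
    apply Finset.sum_congr rfl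
    intro j _
    by_cases h : Fixp j
    · simp [h]
    · simp [h]
  have hconvsum : (∑ j : Fin k,
      if (∀ x ∈ F, ∀ i i' : Fin d, blk i = j → blk i' = j → x i = x i')
      then 0 else c j - 1) = ∑ j : Fin k, if Fixp j then 0 else c j - 1 := rfl
  have hgoal1 : adim F = Module.finrank ℝ Wt := by
    show Module.finrank ℝ (affineSpan ℝ F).direction = _
    rw [direction_affineSpan, hvspan]
  have himg : ((fun x : Fin d → ℝ => fun j : Fin k =>
      ∑ i ∈ Finset.univ.filter (fun i => blk i = j), x i) '' Vyset) = ⇑L '' Vyset := rfl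
  have hgoal2 : adim (convexHull ℝ ((fun x : Fin d → ℝ => fun j : Fin k =>
      ∑ i ∈ Finset.univ.filter (fun i => blk i = j), x i) '' Vyset))
      = Module.finrank ℝ W1 := by
    show Module.finrank ℝ (affineSpan ℝ _).direction = _
    rw [himg, affineSpan_convexHull, direction_affineSpan, ← hW1def]
  rw [hgoal1, hgoal2, hconvsum, hite, hrank1, hkerval]
end
end

section
/- Let V = {v_1,…,v_m} be a nonempty finite subset of ℝ^d and let P = Perm(V). Call a vector in ℝ^d inert if all its coordinates are equal, and call V homogeneous if all v_i have the same coordinate sum. Then: (i) if every v_i is inert, then the affine dimension of P is 0 if all the v_i are equal and 1 otherwise; (ii) if some v_i is not inert, then the affine dimension of P is d − 1 if V is homogeneous and d otherwise. -/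
noncomputable section

/-- The sum-of-coordinates linear functional. -/
def sumL (d : ℕ) : (Fin d → ℝ) →ₗ[ℝ] ℝ where
  toFun x := ∑ i, x i
  map_add' x y := by simp [Finset.sum_add_distrib]
  map_smul' c x := by simp [Finset.mul_sum]

lemma adim_permPolytope_eq {d : ℕ} (V : Set (Fin d → ℝ)) :
    adim (permPolytope V) =
      Module.finrank ℝ
        (vectorSpan ℝ {x | ∃ π : Equiv.Perm (Fin d), ∃ v ∈ V, x = permAct π v}) := by
  unfold adim permPolytope
  rw [affineSpan_convexHull, direction_affineSpan]

lemma mem_orbitSet {d : ℕ} {V : Set (Fin d → ℝ)} {v : Fin d → ℝ} (hv : v ∈ V)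
    (π : Equiv.Perm (Fin d)) :
    permAct π v ∈ {x | ∃ π : Equiv.Perm (Fin d), ∃ v ∈ V, x = permAct π v} :=
  ⟨π, v, hv, rfl⟩

lemma self_mem_orbitSet {d : ℕ} {V : Set (Fin d → ℝ)} {v : Fin d → ℝ} (hv : v ∈ V) :
    v ∈ {x | ∃ π : Equiv.Perm (Fin d), ∃ v ∈ V, x = permAct π v} :=
  ⟨1, v, hv, by funext i; simp [permAct]⟩

lemma sum_permAct {d : ℕ} (π : Equiv.Perm (Fin d)) (v : Fin d → ℝ) :
    ∑ i, permAct π v i = ∑ i, v i := by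
  unfold permAct
  exact Equiv.sum_comp π⁻¹ v

/-- Key lemma: if some `v ∈ V` is not inert, then all the basic differences
`e_k - e_l` lie in the vector span of the orbit set. -/
lemma single_sub_single_mem {d : ℕ} {V : Set (Fin d → ℝ)} {v : Fin d → ℝ} (hv : v ∈ V)
    {i j : Fin d} (hvij : v i ≠ v j) (k l : Fin d) :
    (Pi.single k 1 - Pi.single l 1 : Fin d → ℝ) ∈
      vectorSpan ℝ {x | ∃ π : Equiv.Perm (Fin d), ∃ v ∈ V, x = permAct π v} := by
  set O := {x | ∃ π : Equiv.Perm (Fin d), ∃ v ∈ V, x = permAct π v} with hO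
  have hij : i ≠ j := fun h => hvij (by rw [h])
  rcases eq_or_ne k l with rfl | hkl
  · simp
  -- build a permutation sending i to k and j to l
  set σ : Equiv.Perm (Fin d) := Equiv.swap i k with hσ
  have hσj : σ j ≠ k := by
    intro h
    exact hij (σ.injective (by rw [h, hσ, Equiv.swap_apply_left]))
  set π : Equiv.Perm (Fin d) := (Equiv.swap (σ j) l) * σ with hπ
  have hπi : π i = k := by
    have h1 : σ i = k := Equiv.swap_apply_left i k
    show (Equiv.swap (σ j) l) (σ i) = k
    rw [h1, Equiv.swap_apply_of_ne_of_ne (Ne.symm hσj) hkl]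
  have hπj : π j = l := by
    simp only [hπ, Equiv.Perm.mul_apply]
    exact Equiv.swap_apply_left _ _
  have hπik : π⁻¹ k = i := by rw [← hπi]; exact π.symm_apply_apply _
  have hπjl : π⁻¹ l = j := by rw [← hπj]; exact π.symm_apply_apply _
  set x : Fin d → ℝ := permAct π v with hx
  set y : Fin d → ℝ := permAct ((Equiv.swap k l) * π) v with hy
  have hxO : x ∈ O := mem_orbitSet hv π
  have hyO : y ∈ O := mem_orbitSet hv _
  have hxy : x - y = (v i - v j) • (Pi.single k 1 - Pi.single l 1 : Fin d → ℝ) := by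
    funext m
    simp only [Pi.sub_apply, Pi.smul_apply, smul_eq_mul, hx, hy, permAct, mul_inv_rev,
      Equiv.Perm.mul_apply]
    rcases eq_or_ne m k with rfl | hk
    · rw [Equiv.swap_inv, Equiv.swap_apply_left, hπik, hπjl,
        Pi.single_eq_same, Pi.single_eq_of_ne hkl]
      ring
    · rcases eq_or_ne m l with rfl | hl
      · rw [Equiv.swap_inv, Equiv.swap_apply_right, hπik, hπjl,
          Pi.single_eq_same, Pi.single_eq_of_ne (Ne.symm hkl)]
        ring
      · rw [Equiv.swap_inv, Equiv.swap_apply_of_ne_of_ne hk hl,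
          Pi.single_eq_of_ne hk, Pi.single_eq_of_ne hl]
        ring
  have hmem : x - y ∈ vectorSpan ℝ O := vsub_mem_vectorSpan ℝ hxO hyO
  have hne : v i - v j ≠ 0 := sub_ne_zero.mpr hvij
  have : (Pi.single k 1 - Pi.single l 1 : Fin d → ℝ) = (v i - v j)⁻¹ • (x - y) := by
    rw [hxy, smul_smul, inv_mul_cancel₀ hne, one_smul]
  rw [this]
  exact Submodule.smul_mem _ _ hmem

/-- The sum-zero hyperplane is contained in the vector span of the orbit set. -/
lemma ker_le_vectorSpan {d : ℕ} {V : Set (Fin d → ℝ)} {v : Fin d → ℝ} (hv : v ∈ V)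
    {i j : Fin d} (hvij : v i ≠ v j) :
    LinearMap.ker (sumL d) ≤
      vectorSpan ℝ {x | ∃ π : Equiv.Perm (Fin d), ∃ v ∈ V, x = permAct π v} := by
  intro x hx
  have hx0 : ∑ m, x m = 0 := hx
  have hrep : x = ∑ k, x k • (Pi.single k 1 - Pi.single j 1 : Fin d → ℝ) := by
    have h1 : ∑ k, x k • (Pi.single k 1 : Fin d → ℝ) = x := by
      have : ∀ k : Fin d, x k • (Pi.single k 1 : Fin d → ℝ) = Pi.single k (x k) := by
        intro k
        rw [← Pi.single_smul, smul_eq_mul, mul_one]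
      simp_rw [this]
      exact Finset.univ_sum_single x
    have h2 : ∑ k, x k • (Pi.single j 1 : Fin d → ℝ) = 0 := by
      rw [← Finset.sum_smul, hx0, zero_smul]
    simp_rw [smul_sub]
    rw [Finset.sum_sub_distrib, h1, h2, sub_zero]
  rw [hrep]
  exact Submodule.sum_mem _ fun k _ =>
    Submodule.smul_mem _ _ (single_sub_single_mem hv hvij k j)

lemma finrank_ker_sumL {d : ℕ} (hd : 0 < d) :
    Module.finrank ℝ (LinearMap.ker (sumL d)) = d - 1 := by
  have hsurj : LinearMap.range (sumL d) = ⊤ := by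
    rw [LinearMap.range_eq_top]
    intro r
    refine ⟨Pi.single ⟨0, hd⟩ r, ?_⟩
    show ∑ i, Pi.single (⟨0, hd⟩ : Fin d) r i = r
    simp
  have h := LinearMap.finrank_range_add_finrank_ker (sumL d)
  rw [hsurj] at h
  rw [finrank_top, Module.finrank_self, Module.finrank_fintype_fun_eq_card,
    Fintype.card_fin] at h
  omega

/-- Dimension of an `S_d`-invariant polytope in terms of inertness (all
coordinates of a generator equal) and homogeneity (all generators have the
same coordinate sum). -/
theorem dim_permPolytope
    {d : ℕ} (V : Finset (Fin d → ℝ)) (hVne : V.Nonempty) :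
    ((∀ v ∈ V, ∀ i j : Fin d, v i = v j) →
      ((∀ v ∈ V, ∀ u ∈ V, v = u) → adim (permPolytope (V : Set (Fin d → ℝ))) = 0) ∧
      (¬ (∀ v ∈ V, ∀ u ∈ V, v = u) → adim (permPolytope (V : Set (Fin d → ℝ))) = 1)) ∧
    ((∃ v ∈ V, ∃ i j : Fin d, v i ≠ v j) →
      ((∃ s : ℝ, ∀ v ∈ V, ∑ i, v i = s) →
          adim (permPolytope (V : Set (Fin d → ℝ))) = d - 1) ∧
      (¬ (∃ s : ℝ, ∀ v ∈ V, ∑ i, v i = s) →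
          adim (permPolytope (V : Set (Fin d → ℝ))) = d)) := by
  set O := {x | ∃ π : Equiv.Perm (Fin d), ∃ v ∈ (V : Set (Fin d → ℝ)), x = permAct π v} with hO
  have hadim : adim (permPolytope (V : Set (Fin d → ℝ))) = Module.finrank ℝ (vectorSpan ℝ O) :=
    adim_permPolytope_eq _
  constructor
  · -- all inert
    intro hinert
    have hOV : O = (V : Set (Fin d → ℝ)) := by
      ext x
      constructor
      · rintro ⟨π, v, hv, rfl⟩
        have : permAct π v = v := by
          funext m
          exact hinert v hv (π⁻¹ m) m
        rw [this]; exact hv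
      · intro hx
        exact self_mem_orbitSet hx
    constructor
    · -- all equal : dimension 0
      intro hall
      obtain ⟨v₀, hv₀⟩ := hVne
      have hOsing : O = {v₀} := by
        rw [hOV]
        ext x
        simp only [Set.mem_singleton_iff, Finset.mem_coe]
        exact ⟨fun hx => hall x hx v₀ hv₀, fun h => h ▸ hv₀⟩
      rw [hadim, hOsing, vectorSpan_singleton, finrank_bot]
    · -- not all equal : dimension 1
      intro hne
      push_neg at hne
      obtain ⟨u, hu, w, hw, huw⟩ := hne
      have hd : 0 < d := by
        rcases Nat.eq_zero_or_pos d with rfl | hd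
        · exact absurd (funext fun m => m.elim0) huw
        · exact hd
      set i₀ : Fin d := ⟨0, hd⟩ with hi₀
      set o : Fin d → ℝ := fun _ => 1 with ho
      have hconst : ∀ v ∈ V, ∀ m : Fin d, v m = v i₀ := fun v hv m => hinert v hv m i₀
      have huw0 : u i₀ ≠ w i₀ := by
        intro h
        exact huw (funext fun m => by rw [hconst u hu m, hconst w hw m, h])
      have hvs : vectorSpan ℝ O = Submodule.span ℝ {o} := by
        apply le_antisymm
        · rw [vectorSpan_def, Submodule.span_le]
          rintro z hz
          obtain ⟨a, ha, b, hb, rfl⟩ := hz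
          rw [hOV] at ha hb
          have : a - b = (a i₀ - b i₀) • o := by
            funext m
            simp only [Pi.sub_apply, Pi.smul_apply, ho, smul_eq_mul, mul_one]
            rw [hconst a ha m, hconst b hb m]
          show a - b ∈ Submodule.span ℝ {o}
          rw [this]
          exact Submodule.smul_mem _ _ (Submodule.mem_span_singleton_self o)
        · rw [Submodule.span_le, Set.singleton_subset_iff]
          have hmem : u - w ∈ vectorSpan ℝ O := by
            apply vsub_mem_vectorSpan <;> rw [hOV]
            exacts [hu, hw]
          have : o = (u i₀ - w i₀)⁻¹ • (u - w) := by
            funext m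
            simp only [Pi.smul_apply, Pi.sub_apply, ho, smul_eq_mul]
            rw [hconst u hu m, hconst w hw m,
              inv_mul_cancel₀ (sub_ne_zero.mpr huw0)]
          rw [this]
          exact Submodule.smul_mem _ _ hmem
      rw [hadim, hvs, finrank_span_singleton]
      intro h
      have := congrFun h i₀
      simp [ho] at this
  · -- some non-inert
    rintro ⟨v, hvV, i, j, hvij⟩
    have hv : v ∈ (V : Set (Fin d → ℝ)) := hvV
    have hij : i ≠ j := fun h => hvij (by rw [h])
    have hd : 0 < d := i.pos
    have hker : LinearMap.ker (sumL d) ≤ vectorSpan ℝ O := ker_le_vectorSpan hv hvij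
    constructor
    · -- homogeneous : dimension d - 1
      rintro ⟨s, hs⟩
      have hvs : vectorSpan ℝ O = LinearMap.ker (sumL d) := by
        apply le_antisymm
        · rw [vectorSpan_def, Submodule.span_le]
          rintro z hz
          obtain ⟨a, ha, b, hb, rfl⟩ := hz
          obtain ⟨πa, va, hva, rfl⟩ := ha
          obtain ⟨πb, vb, hvb, rfl⟩ := hb
          show permAct πa va - permAct πb vb ∈ LinearMap.ker (sumL d)
          rw [LinearMap.mem_ker, map_sub]
          show (∑ m, permAct πa va m) - (∑ m, permAct πb vb m) = 0
          rw [sum_permAct, sum_permAct, hs va hva, hs vb hvb, sub_self]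
        · exact hker
      rw [hadim, hvs, finrank_ker_sumL hd]
    · -- non-homogeneous : dimension d
      intro hnh
      push_neg at hnh
      obtain ⟨u, hu, hus⟩ := hnh (∑ m, v m)
      have hsum : ∑ m, u m - ∑ m, v m ≠ 0 := sub_ne_zero.mpr hus
      have hvs : vectorSpan ℝ O = ⊤ := by
        rw [eq_top_iff]
        intro x _
        set c : ℝ := (∑ m, x m) / (∑ m, u m - ∑ m, v m) with hc
        have hx : x = (x - c • (u - v)) + c • (u - v) := by ring_nf
        rw [hx]
        have huvmem : u - v ∈ vectorSpan ℝ O :=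
          vsub_mem_vectorSpan ℝ (self_mem_orbitSet hu) (self_mem_orbitSet hv)
        apply Submodule.add_mem
        · apply hker
          rw [LinearMap.mem_ker]
          show ∑ m, (x - c • (u - v)) m = 0
          have : ∑ m, (x - c • (u - v)) m
              = (∑ m, x m) - c * ((∑ m, u m) - ∑ m, v m) := by
            simp only [Pi.sub_apply, Pi.smul_apply, smul_eq_mul]
            rw [Finset.sum_sub_distrib, ← Finset.mul_sum, Finset.sum_sub_distrib]
          rw [this, hc, div_mul_cancel₀ _ hsum, sub_self]
        · exact Submodule.smul_mem _ _ huvmem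
      rw [hadim, hvs, finrank_top, Module.finrank_fintype_fun_eq_card, Fintype.card_fin]
end
end

section
/- Let d ≥ N ≥ 1, let 1 ≤ r ≤ C(d,N), and let w = (w_1,…,w_r) satisfy w_1 > w_2 > ⋯ > w_r > 0 and Σ_{k=1}^r w_k = 1. For y ∈ ℝ^d, list the C(d,N) numbers Σ_{i ∈ S} y_i, as S ranges over all N-subsets of [d], in decreasing order as s_1(y) ≥ s_2(y) ≥ ⋯. Then the maximum of ⟨y, x⟩ over x in the fermionic spectral polytope F_r(w,N,d) equals Σ_{i=1}^r w_i · s_i(y); equivalently, the maximum over all r-tuples (S_1,…,S_r) of pairwise distinct N-subsets of [d] of Σ_{k=1}^r w_k Σ_{i ∈ S_k} y_i equals Σ_{i=1}^r w_i · s_i(y). -/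
noncomputable section

/-- Characteristic vector of a subset of `Fin d`. -/
def chiF {d : ℕ} (S : Finset (Fin d)) : Fin d → ℝ := fun i => if i ∈ S then 1 else 0

/-- The fermionic spectral polytope `F_r(w,N,d)`: the convex hull of the
weighted vectors `∑ k, w k • χ(S k)` over all `r`-tuples of pairwise distinct
`N`-subsets of `[d]`. -/
def fermiPolytope (d N r : ℕ) (w : Fin r → ℝ) : Set (Fin d → ℝ) :=
  convexHull ℝ {x | ∃ S : Fin r → Finset (Fin d), Function.Injective S ∧
    (∀ k, (S k).card = N) ∧ x = fun i => ∑ k, w k * chiF (S k) i}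

open Finset


lemma exists_bijOn_of_map_eq {α β γ : Type*} [DecidableEq α] [DecidableEq β] [Nonempty β]
    (f : α → γ) (g : β → γ) (A : Finset α) :
    ∀ (B : Finset β), A.val.map f = B.val.map g →
      ∃ e : α → β, Set.BijOn e ↑A ↑B ∧ ∀ a ∈ A, f a = g (e a) := by
  classical
  induction A using Finset.strongInductionOn with
  | _ A ih =>
    intro B h
    rcases A.eq_empty_or_nonempty with rfl | ⟨a, ha⟩
    · have hB : B = ∅ := by
        have h1 : B.val.map g = 0 := by simpa using h.symm
        have h2 : B.val = 0 := by simpa [Multiset.map_eq_zero] using h1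
        exact Finset.val_eq_zero.1 h2
      subst hB
      exact ⟨fun _ => Classical.arbitrary β, by simp [Set.BijOn, Set.MapsTo, Set.InjOn,
        Set.SurjOn], by simp⟩
    · have hfa : f a ∈ B.val.map g := by
        rw [← h]; exact Multiset.mem_map_of_mem f ha
      obtain ⟨b, hbB, hgb⟩ := Multiset.mem_map.1 hfa
      have hbB' : b ∈ B := hbB
      have h' : (A.erase a).val.map f = (B.erase b).val.map g := by
        rw [Finset.erase_val, Finset.erase_val,
          Multiset.map_erase_of_mem f A.val ha, Multiset.map_erase_of_mem g B.val hbB,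
          h, hgb]
      obtain ⟨e', he'bij, he'⟩ := ih (A.erase a) (Finset.erase_ssubset ha) (B.erase b) h'
      refine ⟨Function.update e' a b, ⟨?_, ?_, ?_⟩, ?_⟩
      · intro x hx
        by_cases hxa : x = a
        · subst hxa; simpa using hbB'
        · rw [Function.update_of_ne hxa]
          have hx' : x ∈ A.erase a := Finset.mem_erase.2 ⟨hxa, hx⟩
          exact Finset.mem_of_mem_erase (he'bij.mapsTo hx')
      · intro x₁ hx₁ x₂ hx₂ hex
        by_cases h1 : x₁ = a <;> by_cases h2 : x₂ = a
        · rw [h1, h2]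
        · exfalso
          rw [h1, Function.update_self, Function.update_of_ne h2] at hex
          have hmem : e' x₂ ∈ (↑(B.erase b) : Set β) :=
            he'bij.mapsTo (Finset.mem_erase.2 ⟨h2, hx₂⟩)
          rw [← hex] at hmem
          exact (Finset.mem_erase.1 hmem).1 rfl
        · exfalso
          rw [h2, Function.update_self, Function.update_of_ne h1] at hex
          have hmem : e' x₁ ∈ (↑(B.erase b) : Set β) :=
            he'bij.mapsTo (Finset.mem_erase.2 ⟨h1, hx₁⟩)
          rw [hex] at hmem
          exact (Finset.mem_erase.1 hmem).1 rfl
        · rw [Function.update_of_ne h1, Function.update_of_ne h2] at hex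
          exact he'bij.injOn (by simp [Finset.mem_erase, h1, hx₁])
            (by simp [Finset.mem_erase, h2, hx₂]) hex
      · intro yy hy
        by_cases hyb : yy = b
        · exact ⟨a, ha, by rw [Function.update_self, hyb]⟩
        · obtain ⟨x, hx, hex⟩ := he'bij.surjOn
            (show yy ∈ (↑(B.erase b) : Set β) from Finset.mem_erase.2 ⟨hyb, hy⟩)
          have hx' : x ∈ A.erase a := hx
          refine ⟨x, Finset.mem_of_mem_erase hx', ?_⟩
          rw [Function.update_of_ne (Finset.mem_erase.1 hx').1, hex]
      · intro x hx
        by_cases hxa : x = a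
        · subst hxa; rw [Function.update_self]; exact hgb.symm
        · rw [Function.update_of_ne hxa]
          exact he' x (Finset.mem_erase.2 ⟨hxa, hx⟩)

lemma strictMono_fin_le {m C : ℕ} {f : Fin m → Fin C} (hf : StrictMono f) :
    ∀ k : Fin m, (k : ℕ) ≤ (f k : ℕ) := by
  intro ⟨k, hk⟩
  induction k with
  | zero => exact Nat.zero_le _
  | succ n ihn =>
    have hn : n < m := Nat.lt_of_succ_lt hk
    have h1 : (⟨n, hn⟩ : Fin m) < ⟨n + 1, hk⟩ := by simp [Fin.lt_def]
    have h2 : ((f ⟨n, hn⟩ : Fin C) : ℕ) < ((f ⟨n + 1, hk⟩ : Fin C) : ℕ) := hf h1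
    have h3 := ihn hn
    simp only [Fin.val_mk] at h3 ⊢
    omega

lemma sum_le_sum_top {C : ℕ} {s : Fin C → ℝ} (hs : Antitone s) {m : ℕ} (hm : m ≤ C)
    (ρ : Fin m → Fin C) (hρ : Function.Injective ρ) :
    ∑ k, s (ρ k) ≤ ∑ k : Fin m, s ⟨(k : ℕ), lt_of_lt_of_le k.isLt hm⟩ := by
  classical
  set T := Finset.image ρ univ with hTdef
  have hT : T.card = m := by
    rw [hTdef, Finset.card_image_of_injective _ hρ, Finset.card_univ, Fintype.card_fin]
  have h1 : ∑ k, s (ρ k) = ∑ j ∈ T, s j :=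
    (Finset.sum_image (fun x _ x' _ hxx => hρ hxx)).symm
  have himg : Finset.image (T.orderEmbOfFin hT) univ = T := by
    apply Finset.coe_injective
    rw [Finset.coe_image, Finset.coe_univ, Set.image_univ, Finset.range_orderEmbOfFin]
  have h2 : ∑ j ∈ T, s j = ∑ k : Fin m, s (T.orderEmbOfFin hT k) := by
    conv_lhs => rw [← himg]
    exact Finset.sum_image (fun x _ x' _ hxx => (T.orderEmbOfFin hT).injective hxx)
  rw [h1, h2]
  apply Finset.sum_le_sum
  intro k _
  apply hs
  rw [Fin.le_def]
  exact strictMono_fin_le (T.orderEmbOfFin hT).strictMono k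

lemma abel_mono : ∀ (n : ℕ) (w g h : ℕ → ℝ),
    (∀ i j, i ≤ j → j < n → w j ≤ w i) → (∀ i, i < n → 0 ≤ w i) →
    (∀ m, m ≤ n → ∑ k ∈ range m, g k ≤ ∑ k ∈ range m, h k) →
    ∑ k ∈ range n, w k * g k ≤ ∑ k ∈ range n, w k * h k := by
  intro n
  induction n with
  | zero => intro w g h _ _ _; simp
  | succ n ih =>
    intro w g h hmono h0 hpart
    have sub_eq : ∀ u : ℕ → ℝ, ∑ k ∈ range n, (w k - w n) * u k
        = ∑ k ∈ range n, w k * u k - ∑ k ∈ range n, w n * u k := by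
      intro u
      rw [← Finset.sum_sub_distrib]
      exact Finset.sum_congr rfl fun k _ => by ring
    have split : ∀ u : ℕ → ℝ, ∑ k ∈ range (n + 1), w k * u k =
        (∑ k ∈ range n, (w k - w n) * u k) + w n * ∑ k ∈ range (n + 1), u k := by
      intro u
      rw [Finset.sum_range_succ (fun k => w k * u k), Finset.mul_sum,
        Finset.sum_range_succ (fun k => w n * u k), sub_eq u]
      ring
    rw [split g, split h]
    have t1 : ∑ k ∈ range n, (w k - w n) * g k ≤ ∑ k ∈ range n, (w k - w n) * h k := by
      apply ih
      · intro i j hij hj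
        have := hmono i j hij (Nat.lt_succ_of_lt hj)
        linarith
      · intro i hi
        have := hmono i n (Nat.le_of_lt hi) (Nat.lt_succ_self n)
        linarith
      · intro m hm
        exact hpart m (Nat.le_succ_of_le hm)
    have t2 : w n * ∑ k ∈ range (n + 1), g k ≤ w n * ∑ k ∈ range (n + 1), h k :=
      mul_le_mul_of_nonneg_left (hpart (n + 1) le_rfl) (h0 n (Nat.lt_succ_self n))
    linarith

lemma main_ineq {r C : ℕ} (hrC : r ≤ C) (w : Fin r → ℝ) (hww : StrictAnti w)
    (hwpos : ∀ k, 0 < w k) (s : Fin C → ℝ) (hs : Antitone s)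
    (τ : Fin r → Fin C) (hτ : Function.Injective τ) :
    ∑ k, w k * s (τ k) ≤ ∑ k : Fin r, w k * s ⟨(k : ℕ), lt_of_lt_of_le k.isLt hrC⟩ := by
  classical
  set W : ℕ → ℝ := fun k => if h : k < r then w ⟨k, h⟩ else 0 with hW
  set G : ℕ → ℝ := fun k => if h : k < r then s (τ ⟨k, h⟩) else 0 with hG
  set H : ℕ → ℝ := fun k => if h : k < r then s ⟨k, lt_of_lt_of_le h hrC⟩ else 0 with hH
  have e1 : ∑ k : Fin r, w k * s (τ k) = ∑ k ∈ range r, W k * G k := by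
    rw [Finset.sum_range]
    refine Finset.sum_congr rfl fun k _ => ?_
    simp [hW, hG, k.isLt]
  have e2 : (∑ k : Fin r, w k * s ⟨(k : ℕ), lt_of_lt_of_le k.isLt hrC⟩)
      = ∑ k ∈ range r, W k * H k := by
    rw [Finset.sum_range]
    refine Finset.sum_congr rfl fun k _ => ?_
    simp [hW, hH, k.isLt]
  rw [e1, e2]
  apply abel_mono r W G H
  · intro i j hij hj
    have hi : i < r := lt_of_le_of_lt hij hj
    simp only [hW, dif_pos hi, dif_pos hj]
    exact hww.antitone (Fin.mk_le_mk.2 hij)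
  · intro i hi
    simp only [hW, dif_pos hi]
    exact (hwpos _).le
  · intro m hm
    have eg : ∑ k ∈ range m, G k = ∑ k : Fin m, s ((τ ∘ Fin.castLE hm) k) := by
      rw [Finset.sum_range]
      refine Finset.sum_congr rfl fun k _ => ?_
      have hk : (k : ℕ) < r := lt_of_lt_of_le k.isLt hm
      simp only [hG, dif_pos hk, Function.comp_apply]
      rfl
    have eh : ∑ k ∈ range m, H k
        = ∑ k : Fin m, s ⟨(k : ℕ), lt_of_lt_of_le k.isLt (hm.trans hrC)⟩ := by
      rw [Finset.sum_range]
      refine Finset.sum_congr rfl fun k _ => ?_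
      have hk : (k : ℕ) < r := lt_of_lt_of_le k.isLt hm
      simp only [hH, dif_pos hk]
    rw [eg, eh]
    exact sum_le_sum_top hs (hm.trans hrC) (τ ∘ Fin.castLE hm)
      (hτ.comp (Fin.castLE_injective hm))

/-- Support function of the fermionic spectral polytope. -/
theorem fermiPolytope_support_function
    {d N r : ℕ} (hN1 : 1 ≤ N) (hNd : N ≤ d) (hr1 : 1 ≤ r) (hr : r ≤ d.choose N)
    (w : Fin r → ℝ) (hww : StrictAnti w) (hwpos : ∀ k, 0 < w k)
    (hwsum : ∑ k, w k = 1)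
    (y : Fin d → ℝ) (s : Fin (d.choose N) → ℝ) (hs : Antitone s)
    (hms : Multiset.map (fun S : Finset (Fin d) => ∑ i ∈ S, y i)
        (Finset.powersetCard N (Finset.univ : Finset (Fin d))).val
      = Multiset.map s (Finset.univ : Finset (Fin (d.choose N))).val) :
    IsGreatest ((fun x => dotp y x) '' fermiPolytope d N r w)
      (∑ k : Fin r, w k * s ⟨(k : ℕ), lt_of_lt_of_le k.isLt hr⟩) ∧
    IsGreatest {t : ℝ | ∃ S : Fin r → Finset (Fin d), Function.Injective S ∧
        (∀ k, (S k).card = N) ∧ t = ∑ k, w k * ∑ i ∈ S k, y i}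
      (∑ k : Fin r, w k * s ⟨(k : ℕ), lt_of_lt_of_le k.isLt hr⟩) := by
  classical
  have hCpos : 0 < d.choose N := lt_of_lt_of_le hr1 hr
  haveI : Nonempty (Fin (d.choose N)) := ⟨⟨0, hCpos⟩⟩
  obtain ⟨e, hbij, hfe⟩ := exists_bijOn_of_map_eq (fun S => ∑ i ∈ S, y i) s
    (Finset.powersetCard N (univ : Finset (Fin d))) (univ : Finset (Fin (d.choose N))) hms
  have hmemB : ∀ j : Fin (d.choose N),
      j ∈ (↑(univ : Finset (Fin (d.choose N))) : Set (Fin (d.choose N))) := by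
    intro j; simp
  set E := Set.BijOn.equiv e hbij with hE
  set ι : Fin r → Fin (d.choose N) := fun k => ⟨(k : ℕ), lt_of_lt_of_le k.isLt hr⟩ with hι
  set S₀ : Fin r → Finset (Fin d) := fun k => (E.symm ⟨ι k, hmemB (ι k)⟩ : _).val with hS₀
  have hS₀A : ∀ k, S₀ k ∈ Finset.powersetCard N (univ : Finset (Fin d)) := fun k =>
    (E.symm ⟨ι k, hmemB (ι k)⟩).2
  have hS₀card : ∀ k, (S₀ k).card = N := fun k =>
    (Finset.mem_powersetCard_univ.1 (hS₀A k))
  have he_S₀ : ∀ k, e (S₀ k) = ι k := by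
    intro k
    have h1 : (E (E.symm ⟨ι k, hmemB (ι k)⟩) : Fin (d.choose N)) = ι k := by
      rw [E.apply_symm_apply]
    exact h1
  have hS₀inj : Function.Injective S₀ := by
    intro k₁ k₂ hkk
    have : ι k₁ = ι k₂ := by rw [← he_S₀ k₁, ← he_S₀ k₂, hkk]
    have hval := congrArg Fin.val this
    exact Fin.ext hval
  have hvalS₀ : ∀ k, ∑ i ∈ S₀ k, y i = s (ι k) := by
    intro k
    rw [hfe _ (hS₀A k), he_S₀ k]
  -- upper bound for all admissible tuples
  have hub : ∀ S : Fin r → Finset (Fin d), Function.Injective S → (∀ k, (S k).card = N) →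
      ∑ k, w k * ∑ i ∈ S k, y i ≤ ∑ k : Fin r, w k * s ⟨(k : ℕ), lt_of_lt_of_le k.isLt hr⟩ := by
    intro S hSinj hScard
    have hmemA : ∀ k, S k ∈ Finset.powersetCard N (univ : Finset (Fin d)) := fun k =>
      Finset.mem_powersetCard_univ.2 (hScard k)
    set τ : Fin r → Fin (d.choose N) := fun k => e (S k) with hτdef
    have hτinj : Function.Injective τ := by
      intro k₁ k₂ hkk
      exact hSinj (hbij.injOn (hmemA k₁) (hmemA k₂) hkk)
    have step : ∑ k, w k * ∑ i ∈ S k, y i = ∑ k, w k * s (τ k) :=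
      Finset.sum_congr rfl fun k _ => by rw [hfe _ (hmemA k)]
    rw [step]
    exact main_ineq hr w hww hwpos s hs τ hτinj
  -- value attained
  have hattain : ∑ k, w k * ∑ i ∈ S₀ k, y i
      = ∑ k : Fin r, w k * s ⟨(k : ℕ), lt_of_lt_of_le k.isLt hr⟩ :=
    Finset.sum_congr rfl fun k _ => by rw [hvalS₀ k]
  -- dot product with a vertex
  have hdotv : ∀ S : Fin r → Finset (Fin d),
      dotp y (fun i => ∑ k, w k * chiF (S k) i) = ∑ k, w k * ∑ i ∈ S k, y i := by
    intro S
    unfold dotp chiF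
    simp_rw [Finset.mul_sum]
    rw [Finset.sum_comm]
    refine Finset.sum_congr rfl fun k _ => ?_
    have hpt : ∀ i, y i * (w k * (if i ∈ S k then (1:ℝ) else 0))
        = if i ∈ S k then w k * y i else 0 := fun i => by split <;> ring
    rw [Finset.sum_congr rfl fun i _ => hpt i]
    simp [Finset.sum_ite_mem]
  have hlin : IsLinearMap ℝ (fun x : Fin d → ℝ => dotp y x) := by
    constructor
    · intro a b
      simp [dotp, mul_add, Finset.sum_add_distrib]
    · intro c x
      simp only [dotp, Pi.smul_apply, smul_eq_mul, Finset.mul_sum]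
      exact Finset.sum_congr rfl fun i _ => by ring
  constructor
  · constructor
    · refine ⟨fun i => ∑ k, w k * chiF (S₀ k) i, ?_, ?_⟩
      · exact subset_convexHull ℝ _ ⟨S₀, hS₀inj, hS₀card, rfl⟩
      · exact (hdotv S₀).trans hattain
    · rintro t ⟨x, hx, rfl⟩
      have hsub : fermiPolytope d N r w ⊆
          {x | dotp y x ≤ ∑ k : Fin r, w k * s ⟨(k : ℕ), lt_of_lt_of_le k.isLt hr⟩} := by
        apply convexHull_min
        · rintro x ⟨S, hi, hc, rfl⟩
          simp only [Set.mem_setOf_eq]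
          rw [hdotv S]
          exact hub S hi hc
        · exact convex_halfSpace_le hlin _
      exact hsub hx
  · constructor
    · exact ⟨S₀, hS₀inj, hS₀card, hattain.symm⟩
    · rintro t ⟨S, hi, hc, rfl⟩
      exact hub S hi hc
end
end

section
/- Let d ≥ N ≥ 1 and 1 ≤ r ≤ C(d,N). If y ∈ ℝ^d is a fundamental vector (y_1 ≥ ⋯ ≥ y_d) and S_1,…,S_r are pairwise distinct N-subsets of [d] with ⟨y, χ(S_1)⟩ > ⟨y, χ(S_2)⟩ > ⋯ > ⟨y, χ(S_r)⟩ > ⟨y, χ(T)⟩ for every N-subset T of [d] not among S_1,…,S_r, then for each k with 1 ≤ k ≤ r the collection {S_1,…,S_k} is an order ideal (downward-closed set) of the Gale order on N-subsets of [d]. -/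
noncomputable section

/-- The Gale order on `N`-subsets of `Fin d`: comparing the sorted
enumerations entrywise. -/
def galeLE {d N : ℕ} (S T : Finset (Fin d)) (hS : S.card = N) (hT : T.card = N) : Prop :=
  ∀ k : Fin N, ((S.orderIsoOfFin hS k : Fin d)) ≤ ((T.orderIsoOfFin hT k : Fin d))

lemma dot_chi {d : ℕ} (y : Fin d → ℝ) (S : Finset (Fin d)) :
    dotp y (chiF S) = ∑ i ∈ S, y i := by
  simp [dotp, chiF, mul_ite, mul_one, mul_zero]

lemma dot_chi_iso {d N : ℕ} (y : Fin d → ℝ) (S : Finset (Fin d)) (hS : S.card = N) :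
    dotp y (chiF S) = ∑ k : Fin N, y (S.orderIsoOfFin hS k) := by
  rw [dot_chi, ← Finset.sum_attach S (fun i => y i)]
  exact (Equiv.sum_comp (S.orderIsoOfFin hS).toEquiv (fun x => y x)).symm

lemma dot_mono {d N : ℕ} (y : Fin d → ℝ) (hy : Fund y) (T U : Finset (Fin d))
    (hT : T.card = N) (hU : U.card = N) (h : galeLE T U hT hU) :
    dotp y (chiF U) ≤ dotp y (chiF T) := by
  rw [dot_chi_iso y T hT, dot_chi_iso y U hU]
  exact Finset.sum_le_sum fun k _ => hy _ _ (h k)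

/-- Each prefix of a fundamental lineup of the fermionic configuration is an
order ideal of the Gale order. -/
theorem lineup_prefix_is_gale_ideal
    {d N r : ℕ} (hN1 : 1 ≤ N) (hNd : N ≤ d) (hr1 : 1 ≤ r) (hr : r ≤ d.choose N)
    (y : Fin d → ℝ) (hy : Fund y)
    (S : Fin r → Finset (Fin d)) (hinj : Function.Injective S)
    (hcard : ∀ k, (S k).card = N)
    (hchain : ∀ k l : Fin r, k < l → dotp y (chiF (S l)) < dotp y (chiF (S k)))
    (hrest : ∀ T : Finset (Fin d), T.card = N → (∀ k, T ≠ S k) →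
      ∀ k, dotp y (chiF T) < dotp y (chiF (S k))) :
    ∀ k j : Fin r, j ≤ k → ∀ (T : Finset (Fin d)) (hT : T.card = N),
      galeLE T (S j) hT (hcard j) → ∃ j' : Fin r, j' ≤ k ∧ T = S j' := by
  intro k j hjk T hT hg
  have hmono : dotp y (chiF (S j)) ≤ dotp y (chiF T) :=
    dot_mono y hy T (S j) hT (hcard j) hg
  by_cases h : ∃ j', T = S j'
  · obtain ⟨j', hj'⟩ := h
    refine ⟨j', ?_, hj'⟩
    by_contra hk
    have hkj : k < j' := lt_of_not_ge hk
    have := hchain j j' (lt_of_le_of_lt hjk hkj)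
    rw [← hj'] at this
    linarith
  · push_neg at h
    have := hrest T hT h j
    linarith
end
end

section
/- Let d ≥ N ≥ 1, 1 ≤ r ≤ C(d,N), and let w = (w_1,…,w_r) satisfy w_1 ≥ w_2 ≥ ⋯ ≥ w_r ≥ 0. If (χ(S_1),…,χ(S_r)) is a fundamental lineup of length r of the fermionic point configuration, then the occupation vector o = Σ_{j=1}^r w_j χ(S_j) is itself fundamental, i.e. o_1 ≥ o_2 ≥ ⋯ ≥ o_d. -/
noncomputable section

/-- `(χ(S 0),…,χ(S (r-1)))` is a fundamental lineup of length `r` of the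
fermionic point configuration of `N`-subsets of `[d]`. -/
def IsFundFermionicLineup (d N : ℕ) {r : ℕ} (S : Fin r → Finset (Fin d)) : Prop :=
  Function.Injective S ∧ (∀ k, (S k).card = N) ∧
  ∃ y : Fin d → ℝ, Fund y ∧
    (∀ k l : Fin r, k < l → dotp y (chiF (S l)) < dotp y (chiF (S k))) ∧
    (∀ T : Finset (Fin d), T.card = N → (∀ k, T ≠ S k) →
      ∀ k, dotp y (chiF T) < dotp y (chiF (S k)))

lemma dotp_chiF {d : ℕ} (y : Fin d → ℝ) (T : Finset (Fin d)) :
    dotp y (chiF T) = ∑ t ∈ T, y t := by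
  simp [dotp, chiF, mul_ite, Finset.sum_ite_mem]

/-- The occupation vector of a fundamental fermionic lineup with weakly
decreasing nonnegative weights is itself fundamental. -/
theorem occupation_vector_fundamental
    {d N r : ℕ} (hN1 : 1 ≤ N) (hNd : N ≤ d) (hr1 : 1 ≤ r) (hr : r ≤ d.choose N)
    (w : Fin r → ℝ) (hww : Antitone w) (hwnn : ∀ k, 0 ≤ w k)
    (S : Fin r → Finset (Fin d)) (hS : IsFundFermionicLineup d N S) :
    Fund (fun i => ∑ j, w j * chiF (S j) i) := by
  obtain ⟨hinj, hcard, y, hy, hdec, hout⟩ := hS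
  intro i j hij
  rcases eq_or_lt_of_le hij with rfl | hlt
  · exact le_rfl
  have hne : i ≠ j := ne_of_lt hlt
  -- key swapping lemma
  have key : ∀ k : Fin r, ∃ l : Fin r,
      (j ∈ S k ∧ i ∉ S k) → l < k ∧ S l = insert i ((S k).erase j) := by
    intro k
    by_cases hk : j ∈ S k ∧ i ∉ S k
    · obtain ⟨hjk, hik⟩ := hk
      set T := insert i ((S k).erase j) with hT
      have hinot : i ∉ (S k).erase j := fun h => hik (Finset.mem_of_mem_erase h)
      have hTcard : T.card = N := by
        rw [hT, Finset.card_insert_of_notMem hinot, Finset.card_erase_of_mem hjk, hcard k]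
        omega
      have e1 : dotp y (chiF T) = y i + ∑ t ∈ (S k).erase j, y t := by
        rw [dotp_chiF, hT, Finset.sum_insert hinot]
      have e2 : dotp y (chiF (S k)) = y j + ∑ t ∈ (S k).erase j, y t := by
        rw [dotp_chiF, ← Finset.add_sum_erase _ _ hjk]
      have hdotT : dotp y (chiF (S k)) ≤ dotp y (chiF T) := by
        have := hy i j hlt.le
        linarith
      have hex : ∃ l, T = S l := by
        by_contra hno
        push_neg at hno
        exact absurd (hout T hTcard hno k) (not_lt.mpr hdotT)
      obtain ⟨l, hl⟩ := hex
      refine ⟨l, fun _ => ⟨?_, hl.symm⟩⟩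
      rcases lt_trichotomy l k with h | h | h
      · exact h
      · exfalso
        apply hik
        rw [← h, ← hl]
        exact Finset.mem_insert_self i _
      · exfalso
        have := hdec k l h
        rw [← hl] at this
        linarith
    · exact ⟨k, fun h => absurd h hk⟩
  choose φ hφ using key
  set A := Finset.univ.filter (fun k => i ∈ S k) with hA
  set B := Finset.univ.filter (fun k => j ∈ S k) with hB
  have hmem : ∀ k ∈ B \ A, j ∈ S k ∧ i ∉ S k := by
    intro k hk
    rw [Finset.mem_sdiff, hA, hB, Finset.mem_filter, Finset.mem_filter] at hk
    exact ⟨hk.1.2, fun h => hk.2 ⟨Finset.mem_univ k, h⟩⟩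
  have hφA : ∀ k ∈ B \ A, φ k ∈ A \ B := by
    intro k hk
    obtain ⟨hjk, hik⟩ := hmem k hk
    obtain ⟨hlt', hSeq⟩ := hφ k ⟨hjk, hik⟩
    rw [Finset.mem_sdiff, hA, hB, Finset.mem_filter, Finset.mem_filter]
    refine ⟨⟨Finset.mem_univ _, ?_⟩, fun hmem' => ?_⟩
    · rw [hSeq]; exact Finset.mem_insert_self i _
    · have hjm : j ∈ S (φ k) := hmem'.2
      rw [hSeq] at hjm
      rcases Finset.mem_insert.mp hjm with h | h
      · exact hne h.symm
      · exact (Finset.notMem_erase j _) h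
  have hφinj : Set.InjOn φ ↑(B \ A) := by
    intro k hk k' hk' hkk
    obtain ⟨hjk, hik⟩ := hmem k (by exact_mod_cast hk)
    obtain ⟨hjk', hik'⟩ := hmem k' (by exact_mod_cast hk')
    obtain ⟨_, e⟩ := hφ k ⟨hjk, hik⟩
    obtain ⟨_, e'⟩ := hφ k' ⟨hjk', hik'⟩
    have hinot : i ∉ (S k).erase j := fun h => hik (Finset.mem_of_mem_erase h)
    have hinot' : i ∉ (S k').erase j := fun h => hik' (Finset.mem_of_mem_erase h)
    have h1 : insert j ((S (φ k)).erase i) = S k := by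
      rw [e, Finset.erase_insert hinot, Finset.insert_erase hjk]
    have h1' : insert j ((S (φ k')).erase i) = S k' := by
      rw [e', Finset.erase_insert hinot', Finset.insert_erase hjk']
    apply hinj
    rw [← h1, ← h1', hkk]
  have goal2 : ∑ k ∈ B \ A, w k ≤ ∑ k ∈ A \ B, w k := by
    calc ∑ k ∈ B \ A, w k ≤ ∑ k ∈ B \ A, w (φ k) := by
          refine Finset.sum_le_sum fun k hk => ?_
          obtain ⟨hjk, hik⟩ := hmem k hk
          exact hww (hφ k ⟨hjk, hik⟩).1.le
      _ = ∑ l ∈ (B \ A).image φ, w l := (Finset.sum_image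
          (fun a ha b hb h => hφinj (by exact_mod_cast ha) (by exact_mod_cast hb) h)).symm
      _ ≤ ∑ l ∈ A \ B, w l := Finset.sum_le_sum_of_subset_of_nonneg
          (Finset.image_subset_iff.mpr hφA) (fun l _ _ => hwnn l)
  have repA : ∑ k ∈ A, w k = ∑ k, w k * chiF (S k) i := by
    rw [hA, Finset.sum_filter]
    refine Finset.sum_congr rfl fun k _ => ?_
    by_cases h : i ∈ S k <;> simp [chiF, h]
  have repB : ∑ k ∈ B, w k = ∑ k, w k * chiF (S k) j := by
    rw [hB, Finset.sum_filter]
    refine Finset.sum_congr rfl fun k _ => ?_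
    by_cases h : j ∈ S k <;> simp [chiF, h]
  have hsA : ∑ k ∈ A ∩ B, w k + ∑ k ∈ A \ B, w k = ∑ k ∈ A, w k :=
    Finset.sum_inter_add_sum_sdiff A B w
  have hsB : ∑ k ∈ B ∩ A, w k + ∑ k ∈ B \ A, w k = ∑ k ∈ B, w k :=
    Finset.sum_inter_add_sum_sdiff B A w
  have hci : ∑ k ∈ B ∩ A, w k = ∑ k ∈ A ∩ B, w k := by rw [Finset.inter_comm]
  show ∑ k, w k * chiF (S k) j ≤ ∑ k, w k * chiF (S k) i
  rw [← repA, ← repB]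
  linarith
end
end
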